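/- arXiv:2405.01706 — 6 statements merged into one kernel-verified Lean document; each statement's English description precedes it below -/
import Mathlib

section
/- Let X be a dendroid (hereditarily unicoherent, arcwise connected continuum) in the plane ℝ², and let U be an open subset of ℝ² such that X \ U is connected. Then for any connected component W of U, the set X \ W is connected. -/
open Set Filter Topology

/-- The Euclidean plane. -/
abbrev Plane := EuclideanSpace ℝ (Fin 2)

section Defs

variable {α : Type*} [TopologicalSpace α]

/-- `A` is an arc with endpoints `a` and `b`: a homeomorphic image of `[0,1]`
sending `0 ↦ a` and `1 ↦ b`. -/
def IsArcWithEndpoints (A : Set α) (a b : α) : Prop :=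
  ∃ f : ℝ → α, ContinuousOn f (Set.Icc 0 1) ∧ Set.InjOn f (Set.Icc 0 1) ∧
    f '' (Set.Icc 0 1) = A ∧ f 0 = a ∧ f 1 = b

/-- `A` is an arc. -/
def IsArc (A : Set α) : Prop := ∃ a b, IsArcWithEndpoints A a b

/-- Every two distinct points of `X` are joined by an arc inside `X`. -/
def ArcwiseConnected (X : Set α) : Prop :=
  ∀ x ∈ X, ∀ y ∈ X, x ≠ y → ∃ A, A ⊆ X ∧ IsArcWithEndpoints A x y

/-- Every two subcontinua of `X` have connected intersection. -/
def HereditarilyUnicoherent (X : Set α) : Prop :=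
  ∀ K L : Set α, K ⊆ X → L ⊆ X → IsCompact K → IsConnected K →
    IsCompact L → IsConnected L → IsPreconnected (K ∩ L)

/-- A dendroid: a hereditarily unicoherent, arcwise connected continuum. -/
def IsDendroid (X : Set α) : Prop :=
  IsCompact X ∧ IsConnected X ∧ HereditarilyUnicoherent X ∧ ArcwiseConnected X

/-- The set of endpoints of `X`: points that are endpoints of every arc in `X`
containing them. -/
def Endpoints (X : Set α) : Set α :=
  {e | e ∈ X ∧ ∀ A : Set α, A ⊆ X → IsArc A → e ∈ A → ∃ b, IsArcWithEndpoints A e b}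

/-- `X` is Suslinian: every collection of pairwise-disjoint non-degenerate
subcontinua of `X` is countable. -/
def IsSuslinian (X : Set α) : Prop :=
  ∀ S : Set (Set α), (∀ K ∈ S, K ⊆ X ∧ IsCompact K ∧ IsConnected K ∧ K.Nontrivial) →
    S.PairwiseDisjoint id → S.Countable

/-- The arc component of `x` inside the set `S`. -/
def arcComponentIn (S : Set α) (x : α) : Set α :=
  {y | y ∈ S ∧ (y = x ∨ ∃ A, A ⊆ S ∧ IsArcWithEndpoints A x y)}

/-- The collection of arc components of `X \ {x}`; its cardinality is the order of `x`. -/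
def orderComponents (X : Set α) (x : α) : Set (Set α) :=
  {C | ∃ y ∈ X \ {x}, C = arcComponentIn (X \ {x}) y}

/-- Ramification points of `X`: points of order at least 3. -/
def RamificationPoints (X : Set α) : Set α :=
  {x | x ∈ X ∧ 3 ≤ (orderComponents X x).encard}

/-- `A` is a clopen subset of the subspace `Y`. -/
def IsClopenIn (Y A : Set α) : Prop :=
  A ⊆ Y ∧ (∃ U, IsOpen U ∧ A = Y ∩ U) ∧ (∃ C, IsClosed C ∧ A = Y ∩ C)

/-- The quasicomponent of `x` in the subspace `Y`: the intersection of all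
clopen subsets of `Y` containing `x`. -/
def quasicomponentIn (Y : Set α) (x : α) : Set α :=
  {y ∈ Y | ∀ A : Set α, IsClopenIn Y A → x ∈ A → y ∈ A}

/-- `Y` is hereditarily disconnected: it contains no non-degenerate connected subset. -/
def HereditarilyDisconnected (Y : Set α) : Prop :=
  ∀ S : Set α, S ⊆ Y → IsPreconnected S → S.Subsingleton

end Defs

/-- The point `x` of `X` is (arcwise) accessible from `ℝ² \ X`. -/
def AccessiblePoint (X : Set Plane) (x : Plane) : Prop :=
  ∃ A : Set Plane, IsArc A ∧ A ∩ X = {x}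

/-- `σ` separates the points `b` and `d` in the plane: no connected subset of the
complement of `σ` contains both. -/
def SeparatesPoints (σ : Set Plane) (b d : Plane) : Prop :=
  b ∉ σ ∧ d ∉ σ ∧ ∀ K : Set Plane, K ⊆ σᶜ → IsPreconnected K → b ∈ K → d ∉ K

/-- A simple closed curve in the plane: the image of a period-1 parametrization
injective on `[0,1)`. -/
def IsSimpleClosedCurve (O : Set Plane) : Prop :=
  ∃ f : ℝ → Plane, Continuous f ∧ Function.Periodic f 1 ∧
    Set.InjOn f (Set.Ico 0 1) ∧ f '' (Set.Ico 0 1) = O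

/-- The dendroid `X` is smooth at `p`: there is a choice `arcTo x` of the unique arc
from `x` to `p` (reduced to `{p}` for `x = p`) such that `xₙ → x` in `X` implies
`arcTo xₙ → arcTo x` in the Hausdorff distance. -/
def DendroidSmoothAt (X : Set Plane) (p : Plane) : Prop :=
  p ∈ X ∧ ∃ arcTo : Plane → Set Plane,
    arcTo p = {p} ∧
    (∀ x ∈ X, x ≠ p → arcTo x ⊆ X ∧ IsArcWithEndpoints (arcTo x) x p) ∧
    (∀ (xs : ℕ → Plane) (x : Plane), (∀ n, xs n ∈ X) → x ∈ X →
      Filter.Tendsto xs Filter.atTop (nhds x) →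
      Filter.Tendsto (fun n => EMetric.hausdorffEdist (arcTo (xs n)) (arcTo x))
        Filter.atTop (nhds 0))

/-- A space is zero-dimensional if it has a basis of clopen sets. -/
def IsZeroDimensionalSpace (β : Type*) [TopologicalSpace β] : Prop :=
  ∀ (x : β) (U : Set β), IsOpen U → x ∈ U → ∃ V : Set β, IsClopen V ∧ x ∈ V ∧ V ⊆ U

/-- A space is almost zero-dimensional if it has a neighborhood basis of sets
which are intersections of clopen sets. -/
def IsAlmostZeroDimensionalSpace (β : Type*) [TopologicalSpace β] : Prop :=
  ∀ (x : β) (U : Set β), IsOpen U → x ∈ U →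
    ∃ V : Set β, V ∈ nhds x ∧ V ⊆ U ∧
      ∃ 𝒞 : Set (Set β), (∀ C ∈ 𝒞, IsClopen C) ∧ V = ⋂₀ 𝒞

/-- The union of `W` with all of the bounded connected components of its complement. -/
def boundedComplementaryFill (W : Set Plane) : Set Plane :=
  W ∪ ⋃₀ {K | (∃ x ∈ Wᶜ, K = connectedComponentIn Wᶜ x) ∧ Bornology.IsBounded K}

/-- A Bellamy dendroid: a (non-degenerate) smooth plane dendroid whose endpoint
set is connected. -/
def IsBellamyDendroid (K : Set Plane) : Prop :=
  IsDendroid K ∧ K.Nontrivial ∧ (∃ q, DendroidSmoothAt K q) ∧ IsConnected (Endpoints K)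

/-- The middle-thirds Cantor set. -/
noncomputable def cantorC : Set ℝ :=
  {x | ∃ a : ℕ → Bool, x = ∑' i, (if a i then (2 : ℝ) else 0) / 3 ^ (i + 1)}

/-!
A separation of `X \ W` into closed sets `v`, `w` puts the connected set `X \ U` on one side,
say in `v`. Then `v ∪ closure W` and `w \ W` are closed and cover `X`, so by connectedness of `X`
some point of `X \ W` lies in `w` and in `v ∪ closure W`. Since `closure W` meets `U` only
inside `W`, that point is in `v` or in `X \ U ⊆ v`, contradicting the separation.
-/

section Separation

variable {α : Type*} [TopologicalSpace α]

theorem closure_connectedComponentIn_inter_subset [LocallyConnectedSpace α] {U : Set α}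
    (hU : IsOpen U) (u : α) :
    closure (connectedComponentIn U u) ∩ U ⊆ connectedComponentIn U u := by
  rintro x ⟨hx_closure, hxU⟩
  obtain ⟨y, hyx, hyu⟩ := _root_.mem_closure_iff.1 hx_closure _ hU.connectedComponentIn
    (mem_connectedComponentIn hxU)
  rw [connectedComponentIn_eq hyu, ← connectedComponentIn_eq hyx]
  exact mem_connectedComponentIn hxU

theorem IsPreconnected.subset_or_subset_of_isClosed {s v w : Set α} (hs : IsPreconnected s)
    (hv : IsClosed v) (hw : IsClosed w) (hsvw : s ⊆ v ∪ w) (hdisj : s ∩ (v ∩ w) = ∅) :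
    s ⊆ v ∨ s ⊆ w := by
  by_contra! h
  obtain ⟨⟨a, has, hav⟩, ⟨b, hbs, hbw⟩⟩ := And.imp not_subset.1 not_subset.1 h
  have hbv : b ∈ v := (hsvw hbs).resolve_right hbw
  have haw : a ∈ w := (hsvw has).resolve_left hav
  obtain ⟨x, hx⟩ := isPreconnected_closed_iff.1 hs v w hv hw hsvw ⟨b, hbs, hbv⟩ ⟨a, has, haw⟩
  exact (hdisj ▸ hx : x ∈ (∅ : Set α))

theorem IsPreconnected.diff_of_closure_inter_subset {X U W : Set α} (hX : IsPreconnected X)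
    (hW : IsOpen W) (hWU : W ⊆ U) (hWcl : closure W ∩ U ⊆ W) (hXU : IsPreconnected (X \ U)) :
    IsPreconnected (X \ W) := by
  have hXUW : X \ U ⊆ X \ W := sdiff_subset_sdiff_right hWU
  rw [isPreconnected_closed_iff]
  intro v w hv hw hcov ⟨a, haXW, hav⟩ ⟨b, hbXW, hbw⟩
  by_contra! hdisj
  wlog hUv : X \ U ⊆ v generalizing v w a b
  · have hUw : X \ U ⊆ w := (hXU.subset_or_subset_of_isClosed hv hw (hXUW.trans hcov)
      (subset_empty_iff.1 (hdisj ▸ inter_subset_inter_left _ hXUW))).resolve_left hUv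
    exact this w v hw hv (union_comm v w ▸ hcov) b hbXW hbw a haXW hav
      (inter_comm v w ▸ hdisj) hUw
  have hcovX : X ⊆ (v ∪ closure W) ∪ w \ W := by
    intro x hx
    by_cases hxW : x ∈ W
    · exact Or.inl (Or.inr (subset_closure hxW))
    · rcases hcov ⟨hx, hxW⟩ with hxv | hxw
      · exact Or.inl (Or.inl hxv)
      · exact Or.inr ⟨hxw, hxW⟩
  obtain ⟨x, hxX, hx_vW, hxw, hxW⟩ := isPreconnected_closed_iff.1 hX _ _
    (hv.union isClosed_closure) (hw.sdiff hW) hcovX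
    ⟨a, haXW.1, Or.inl hav⟩ ⟨b, hbXW.1, hbw, hbXW.2⟩
  have hxv : x ∈ v :=
    hx_vW.elim id fun hx_cl => hUv ⟨hxX, fun hxU => hxW (hWcl ⟨hx_cl, hxU⟩)⟩
  exact (hdisj ▸ ⟨⟨hxX, hxW⟩, hxv, hxw⟩ : x ∈ (∅ : Set α))

end Separation

/-- Lemma 3. -/
theorem stmt_0 (X U : Set Plane) (hX : IsDendroid X) (hU : IsOpen U)
    (hXU : IsPreconnected (X \ U))
    (W : Set Plane) (hW : ∃ u ∈ U, W = connectedComponentIn U u) :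
    IsPreconnected (X \ W) := by
  obtain ⟨u, -, rfl⟩ := hW
  exact hX.2.1.isPreconnected.diff_of_closure_inter_subset hU.connectedComponentIn
    (connectedComponentIn_subset U u) (closure_connectedComponentIn_inter_subset hU u) hXU
end

section
/- Let X be a dendroid. Then X is Suslinian if and only if X \ E(X) is a countable union of arcs. -/
open Set Filter Topology

/-!
If `X \ E(X)` is covered by countably many arcs, every non-degenerate subcontinuum `K` of `X`
contains an arc, whose interior is an uncountable set of non-endpoints. So `K` meets some covering
arc `A` in an uncountable set, which is connected by hereditary unicoherence and therefore contains
a point of `A` with rational parameter. Disjoint continua thus pick distinct points of a countable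
set.

Conversely, take by Zorn a maximal family `G` of disjoint arcs of non-endpoints; it is countable
when `X` is Suslinian. A non-endpoint `y` is interior to an arc, and the subarcs on either side of
`y` meet members `D`, `D'` of `G` by maximality. The part of the arc between the two meeting
points lies in every continuum through them, in particular in `D ∪ C ∪ D'`, where `C` is an
arc of non-endpoints fixed once for each pair `D ≠ D'`. So `G` and these countably many arcs `C`
cover `X \ E(X)`.
-/

lemma Set.PairwiseDisjoint.countable_of_inter_nonempty {α : Type*} {F : Set (Set α)}
    {P : Set α} (hF : F.PairwiseDisjoint id) (hP : P.Countable)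
    (h : ∀ K ∈ F, (K ∩ P).Nonempty) : F.Countable := by
  choose p hp using h
  have := hP.to_subtype
  refine countable_coe_iff.1 <| Function.Injective.countable
    (f := fun K : F => (⟨p K K.2, (hp K K.2).2⟩ : P)) fun ⟨K, hK⟩ ⟨L, hL⟩ hKL => ?_
  by_contra hne
  exact (hF hK hL fun h => hne (Subtype.ext h)).ne_of_mem (hp K hK).1 (hp L hL).1
    (congrArg Subtype.val hKL)

lemma exists_pairwiseDisjoint_forall_inter_nonempty {α : Type*} {p : Set α → Prop}
    (hp : ∀ A, p A → A.Nonempty) :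
    ∃ G : Set (Set α), (∀ D ∈ G, p D) ∧ G.PairwiseDisjoint id ∧
      ∀ A, p A → ∃ D ∈ G, (A ∩ D).Nonempty := by
  obtain ⟨G, hG⟩ :=
    zorn_subset {G : Set (Set α) | (∀ D ∈ G, p D) ∧ G.PairwiseDisjoint id}
    fun c hc hchain => ⟨⋃₀ c, ⟨fun D ⟨G, hGc, hDG⟩ => (hc hGc).1 D hDG,
      (hchain.pairwiseDisjoint_sUnion id).2 fun G hG => (hc hG).2⟩,
      fun _ => subset_sUnion_of_mem⟩
  refine ⟨G, hG.1.1, hG.1.2, fun A hA => ?_⟩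
  by_contra! hdisj
  have hAG : A ∈ G := hG.2 ⟨forall_mem_insert.2 ⟨hA, hG.1.1⟩,
    hG.1.2.insert fun D hD _ => disjoint_iff_inter_eq_empty.2 (hdisj D hD)⟩
    (subset_insert A G) (mem_insert A G)
  exact (hp A hA).ne_empty (by simpa using hdisj A hAG)

lemma IsPreconnected.exists_rat_mem {T : Set ℝ} (hT : IsPreconnected T) (hnt : T.Nontrivial) :
    ∃ q : ℚ, (q : ℝ) ∈ T := by
  obtain ⟨s, hs, t, ht, hst⟩ := hnt
  obtain ⟨q, hq⟩ := exists_rat_btwn (min_lt_max.2 hst)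
  exact ⟨q, hT.ordConnected.uIcc_subset hs ht ⟨hq.1.le, hq.2.le⟩⟩

section Arcs

variable {α : Type*} [TopologicalSpace α]

lemma IsPreconnected.of_image_of_injOn [T2Space α] {β : Type*} [TopologicalSpace β]
    {f : β → α} {s T : Set β} (hs : IsCompact s) (hc : ContinuousOn f s) (hi : InjOn f s)
    (hT : T ⊆ s) (h : IsPreconnected (f '' T)) : IsPreconnected T := by
  have := isCompact_iff_compactSpace.mp hs
  have hf := hc.domRestrict.isClosedEmbedding hi.injective
  have hT' : IsPreconnected ((↑) ⁻¹' T : Set s) := by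
    rwa [← hf.isInducing.isPreconnected_image, domRestrict_eq, image_comp,
      Subtype.image_preimage_coe, inter_eq_right.2 hT]
  simpa [Subtype.image_preimage_coe, inter_eq_right.2 hT] using
    hT'.image _ continuous_subtype_val.continuousOn

variable {A : Set α} {a b : α}

lemma IsArcWithEndpoints.symm (h : IsArcWithEndpoints A a b) : IsArcWithEndpoints A b a := by
  obtain ⟨f, hc, hi, rfl, rfl, rfl⟩ := h
  have hmaps : MapsTo (fun r : ℝ => 1 - r) (Icc 0 1) (Icc 0 1) := fun r hr =>
    ⟨by linarith [hr.2], by linarith [hr.1]⟩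
  refine ⟨fun r => f (1 - r), hc.comp (by fun_prop) hmaps,
    fun r hr s hs hrs => by simpa using hi (hmaps hr) (hmaps hs) hrs, ?_, by simp, by simp⟩
  rw [show (fun r => f (1 - r)) = f ∘ (fun r : ℝ => 1 - r) from rfl, image_comp,
    image_const_sub_Icc]
  norm_num

lemma IsArcWithEndpoints.isCompact (h : IsArcWithEndpoints A a b) : IsCompact A := by
  obtain ⟨f, hc, -, rfl, -⟩ := h
  exact isCompact_Icc.image_of_continuousOn hc

lemma IsArcWithEndpoints.isConnected (h : IsArcWithEndpoints A a b) : IsConnected A := by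
  obtain ⟨f, hc, -, rfl, -⟩ := h
  exact (isConnected_Icc zero_le_one).image f hc

lemma IsArcWithEndpoints.left_mem (h : IsArcWithEndpoints A a b) : a ∈ A := by
  obtain ⟨f, -, -, rfl, rfl, -⟩ := h
  exact mem_image_of_mem f (left_mem_Icc.2 zero_le_one)

lemma IsArcWithEndpoints.right_mem (h : IsArcWithEndpoints A a b) : b ∈ A :=
  h.symm.left_mem

lemma IsArcWithEndpoints.ne (h : IsArcWithEndpoints A a b) : a ≠ b := by
  obtain ⟨f, -, hi, -, rfl, rfl⟩ := h
  exact fun h01 => zero_ne_one (hi (left_mem_Icc.2 zero_le_one) (right_mem_Icc.2 zero_le_one) h01)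

lemma IsArcWithEndpoints.nontrivial (h : IsArcWithEndpoints A a b) : A.Nontrivial :=
  ⟨a, h.left_mem, b, h.right_mem, h.ne⟩

lemma IsArc.isCompact (h : IsArc A) : IsCompact A :=
  let ⟨_, _, h⟩ := h; h.isCompact

lemma IsArc.isConnected (h : IsArc A) : IsConnected A :=
  let ⟨_, _, h⟩ := h; h.isConnected

lemma IsArc.nontrivial (h : IsArc A) : A.Nontrivial :=
  let ⟨_, _, h⟩ := h; h.nontrivial

lemma IsArcWithEndpoints.isPreconnected_diff_left (h : IsArcWithEndpoints A a b) :
    IsPreconnected (A \ {a}) := by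
  obtain ⟨f, hc, hi, rfl, rfl, -⟩ := h
  rw [← image_singleton, ← hi.image_sdiff_subset (singleton_subset_iff.2
    (left_mem_Icc.2 zero_le_one)), Icc_sdiff_left]
  exact isPreconnected_Ioc.image f (hc.mono Ioc_subset_Icc_self)

lemma IsArc.exists_countable_inter_nonempty [T2Space α] (hA : IsArc A) :
    ∃ P : Set α, P.Countable ∧
      ∀ T ⊆ A, IsPreconnected T → T.Nontrivial → (T ∩ P).Nonempty := by
  obtain ⟨-, -, f, hc, hi, rfl, -, -⟩ := hA
  refine ⟨f '' (Icc 0 1 ∩ range ((↑) : ℚ → ℝ)),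
    ((countable_range _).mono inter_subset_right).image f, fun T hTA hT hnt => ?_⟩
  have hT' : f '' (Icc 0 1 ∩ f ⁻¹' T) = T := by rw [image_inter_preimage, inter_eq_right.2 hTA]
  rw [← hT'] at hT hnt
  obtain ⟨q, hqI, hqT⟩ := (IsPreconnected.of_image_of_injOn isCompact_Icc hc hi
    inter_subset_left hT).exists_rat_mem (nontrivial_of_image f _ hnt)
  exact ⟨f q, hqT, q, ⟨hqI, q, rfl⟩, rfl⟩

lemma exists_image_Ioo_eq_of_mem_diff_endpoints {X : Set α} {y : α} (hy : y ∈ X \ Endpoints X) :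
    ∃ f : ℝ → α, ContinuousOn f (Icc 0 1) ∧ InjOn f (Icc 0 1) ∧ f '' Icc 0 1 ⊆ X ∧
      ∃ t ∈ Ioo (0 : ℝ) 1, f t = y := by
  obtain ⟨A, hAX, ⟨a, b, f, hc, hi, rfl, rfl, rfl⟩, ⟨t, ht, rfl⟩, hnot⟩ :
      ∃ A ⊆ X, IsArc A ∧ y ∈ A ∧ ∀ b, ¬IsArcWithEndpoints A y b := by
    simpa [Endpoints, hy.1] using hy.2
  rcases ht.1.eq_or_lt with rfl | h0
  · exact absurd ⟨f, hc, hi, rfl, rfl, rfl⟩ (hnot (f 1))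
  rcases ht.2.eq_or_lt with rfl | h1
  · exact absurd (IsArcWithEndpoints.symm ⟨f, hc, hi, rfl, rfl, rfl⟩) (hnot (f 0))
  exact ⟨f, hc, hi, hAX, t, ⟨h0, h1⟩, rfl⟩

end Arcs

section Dendroids

variable {α : Type*} [TopologicalSpace α] [T2Space α] {X : Set α} {f : ℝ → α}

lemma image_Ioo_subset_diff_endpoints (hc : ContinuousOn f (Icc 0 1))
    (hi : InjOn f (Icc 0 1)) (hfX : f '' Icc 0 1 ⊆ X) : f '' Ioo 0 1 ⊆ X \ Endpoints X := by
  rintro _ ⟨t, ht, rfl⟩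
  have htI : t ∈ Icc (0 : ℝ) 1 := Ioo_subset_Icc_self ht
  refine ⟨hfX (mem_image_of_mem f htI), fun hend => ?_⟩
  obtain ⟨b, hb⟩ :=
    hend.2 _ hfX ⟨f 0, f 1, f, hc, hi, rfl, rfl, rfl⟩ (mem_image_of_mem f htI)
  have hpre : IsPreconnected (Icc (0 : ℝ) 1 \ {t}) := by
    refine IsPreconnected.of_image_of_injOn isCompact_Icc hc hi sdiff_subset ?_
    rw [hi.image_sdiff_subset (singleton_subset_iff.2 htI), image_singleton]
    exact hb.isPreconnected_diff_left
  exact (hpre.Icc_subset ⟨left_mem_Icc.2 zero_le_one, ht.1.ne⟩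
    ⟨right_mem_Icc.2 zero_le_one, ht.2.ne'⟩ htI).2 (mem_singleton t)

lemma IsArcWithEndpoints.subset_diff_endpoints {A : Set α} {a b : α}
    (h : IsArcWithEndpoints A a b) (hAX : A ⊆ X) (ha : a ∉ Endpoints X)
    (hb : b ∉ Endpoints X) : A ⊆ X \ Endpoints X := by
  obtain ⟨f, hc, hi, rfl, rfl, rfl⟩ := h
  rintro _ ⟨t, ht, rfl⟩
  rcases ht.1.eq_or_lt with rfl | h0
  · exact ⟨hAX (mem_image_of_mem f ht), ha⟩
  rcases ht.2.eq_or_lt with rfl | h1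
  · exact ⟨hAX (mem_image_of_mem f ht), hb⟩
  exact image_Ioo_subset_diff_endpoints hc hi hAX ⟨t, ⟨h0, h1⟩, rfl⟩

lemma HereditarilyUnicoherent.image_Icc_subset (hX : HereditarilyUnicoherent X)
    (hc : ContinuousOn f (Icc 0 1)) (hi : InjOn f (Icc 0 1)) (hfX : f '' Icc 0 1 ⊆ X)
    {K : Set α} (hK : K ⊆ X) (hKc : IsCompact K) (hKconn : IsConnected K) {s t : ℝ}
    (hs : s ∈ Icc (0 : ℝ) 1) (ht : t ∈ Icc (0 : ℝ) 1) (hfs : f s ∈ K) (hft : f t ∈ K) :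
    f '' Icc s t ⊆ K := by
  have hpre : IsPreconnected (Icc (0 : ℝ) 1 ∩ f ⁻¹' K) := by
    refine IsPreconnected.of_image_of_injOn isCompact_Icc hc hi inter_subset_left ?_
    rw [image_inter_preimage]
    exact hX _ K hfX hK (isCompact_Icc.image_of_continuousOn hc)
      ((isConnected_Icc zero_le_one).image f hc) hKc hKconn
  rintro _ ⟨r, hr, rfl⟩
  exact (hpre.Icc_subset ⟨hs, hfs⟩ ⟨ht, hft⟩ hr).2

lemma IsDendroid.exists_arc_subset (hX : IsDendroid X) {K : Set α} (hK : K ⊆ X)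
    (hKc : IsCompact K) (hKconn : IsConnected K) {x y : α} (hx : x ∈ K) (hy : y ∈ K)
    (hxy : x ≠ y) : ∃ A ⊆ K, IsArcWithEndpoints A x y := by
  obtain ⟨_, hAX, f, hc, hi, rfl, rfl, rfl⟩ := hX.2.2.2 x (hK hx) y (hK hy) hxy
  exact ⟨_, hX.2.2.1.image_Icc_subset hc hi hAX hK hKc hKconn (left_mem_Icc.2 zero_le_one)
    (right_mem_Icc.2 zero_le_one) hx hy, f, hc, hi, rfl, rfl, rfl⟩

lemma IsDendroid.arcwiseConnected_diff_endpoints (hX : IsDendroid X) :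
    ArcwiseConnected (X \ Endpoints X) := fun x hx y hy hxy =>
  let ⟨A, hAX, hA⟩ := hX.2.2.2 x hx.1 y hy.1 hxy
  ⟨A, hA.subset_diff_endpoints hAX hx.2 hy.2, hA⟩

lemma IsDendroid.not_countable_inter_diff_endpoints (hX : IsDendroid X) {K : Set α}
    (hK : K ⊆ X) (hKc : IsCompact K) (hKconn : IsConnected K) (hnt : K.Nontrivial) :
    ¬(K ∩ (X \ Endpoints X)).Countable := by
  obtain ⟨x, hx, y, hy, hxy⟩ := hnt
  obtain ⟨_, hAK, f, hc, hi, rfl, -, -⟩ := hX.exists_arc_subset hK hKc hKconn hx hy hxy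
  have hIoo : ¬(Ioo (0 : ℝ) 1).Countable := by
    rw [← Cardinal.le_aleph0_iff_set_countable, Cardinal.mk_Ioo_real zero_lt_one]
    exact Cardinal.aleph0_lt_continuum.not_ge
  refine fun hcount => hIoo (countable_of_injective_of_countable_image
    (hi.mono Ioo_subset_Icc_self) (hcount.mono (subset_inter ?_ ?_)))
  · exact (image_mono Ioo_subset_Icc_self).trans hAK
  · exact image_Ioo_subset_diff_endpoints hc hi (hAK.trans hK)

lemma IsDendroid.exists_mem_forall_subcontinuum_mem (hX : IsDendroid X) {M : Set α}
    (hM : ∀ A, IsArc A → A ⊆ X \ Endpoints X → (A ∩ M).Nonempty) {y : α}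
    (hy : y ∈ X \ Endpoints X) :
    ∃ w ∈ M, ∃ w' ∈ M,
      ∀ K ⊆ X, IsCompact K → IsConnected K → w ∈ K → w' ∈ K → y ∈ K := by
  obtain ⟨f, hc, hi, hfX, t, ht, rfl⟩ := exists_image_Ioo_eq_of_mem_diff_endpoints hy
  have hmeets : ∀ a b : ℝ, 0 < a → a < b → b < 1 → ∃ s ∈ Icc a b, f s ∈ M := by
    intro a b ha hab hb
    have hsub : Icc a b ⊆ Icc (0 : ℝ) 1 := Icc_subset_Icc ha.le hb.le
    obtain ⟨B, hBK, hB⟩ := hX.exists_arc_subset ((image_mono hsub).trans hfX)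
      (isCompact_Icc.image_of_continuousOn (hc.mono hsub))
      ((isConnected_Icc hab.le).image f (hc.mono hsub))
      (mem_image_of_mem f (left_mem_Icc.2 hab.le)) (mem_image_of_mem f (right_mem_Icc.2 hab.le))
      fun h => hab.ne (hi (hsub (left_mem_Icc.2 hab.le)) (hsub (right_mem_Icc.2 hab.le)) h)
    obtain ⟨_, hwB, hwM⟩ := hM B ⟨_, _, hB⟩ <| hBK.trans <|
      (image_mono (Icc_subset_Ioo ha hb)).trans (image_Ioo_subset_diff_endpoints hc hi hfX)
    obtain ⟨s, hs, rfl⟩ := hBK hwB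
    exact ⟨s, hs, hwM⟩
  obtain ⟨s, hs, hfs⟩ := hmeets (t / 2) t (by linarith [ht.1]) (by linarith [ht.1]) ht.2
  obtain ⟨s', hs', hfs'⟩ :=
    hmeets t ((t + 1) / 2) ht.1 (by linarith [ht.2]) (by linarith [ht.2])
  refine ⟨f s, hfs, f s', hfs', fun K hK hKc hKconn hsK hs'K => ?_⟩
  refine hX.2.2.1.image_Icc_subset hc hi hfX hK hKc hKconn ?_ ?_ hsK hs'K
    ⟨t, ⟨hs.2, hs'.1⟩, rfl⟩
  · exact ⟨by linarith [ht.1, hs.1], by linarith [ht.2, hs.2]⟩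
  · exact ⟨by linarith [ht.1, hs'.1], by linarith [ht.2, hs'.2]⟩

end Dendroids

section Suslinian

variable {α : Type*} [TopologicalSpace α] [T2Space α] {X : Set α}

lemma IsDendroid.isSuslinian_of_diff_endpoints_eq_sUnion (hX : IsDendroid X)
    {S : Set (Set α)} (hSc : S.Countable) (hSarc : ∀ A ∈ S, IsArc A)
    (hSeq : X \ Endpoints X = ⋃₀ S) : IsSuslinian X := by
  intro F hF hFdisj
  have hSX : ∀ A ∈ S, A ⊆ X := fun A hA =>
    (subset_sUnion_of_mem hA).trans (hSeq ▸ sdiff_subset)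
  choose! P hPc hP using fun A hA => (hSarc A hA).exists_countable_inter_nonempty
  refine hFdisj.countable_of_inter_nonempty (hSc.biUnion hPc) fun K hK => ?_
  obtain ⟨hKX, hKc, hKconn, hKnt⟩ := hF K hK
  obtain ⟨A, hA, hKA⟩ : ∃ A ∈ S, ¬(K ∩ A).Countable := by
    by_contra! h
    apply hX.not_countable_inter_diff_endpoints hKX hKc hKconn hKnt
    rw [hSeq, sUnion_eq_biUnion, inter_iUnion₂]
    exact hSc.biUnion h
  obtain ⟨x, hxKA, hxP⟩ := hP A hA (K ∩ A) inter_subset_right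
    (hX.2.2.1 K A hKX (hSX A hA) hKc hKconn (hSarc A hA).isCompact (hSarc A hA).isConnected)
    (not_subsingleton_iff.1 fun h => hKA h.countable)
  exact ⟨x, hxKA.1, mem_biUnion hA hxP⟩

lemma IsDendroid.exists_countable_sUnion_eq_diff_endpoints_of_maximal (hX : IsDendroid X)
    {G : Set (Set α)} (hGc : G.Countable) (hGY : ∀ D ∈ G, IsArc D ∧ D ⊆ X \ Endpoints X)
    (hGdisj : G.PairwiseDisjoint id)
    (hGmax : ∀ A, IsArc A ∧ A ⊆ X \ Endpoints X → ∃ D ∈ G, (A ∩ D).Nonempty) :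
    ∃ S : Set (Set α), S.Countable ∧ (∀ A ∈ S, IsArc A) ∧
      X \ Endpoints X = ⋃₀ S := by
  have : Nonempty α := hX.2.1.nonempty.to_subtype.map Subtype.val
  choose! pt hpt using fun D (hD : D ∈ G) => (hGY D hD).1.nontrivial.nonempty
  have hptY : ∀ D ∈ G, pt D ∈ X \ Endpoints X := fun D hD => (hGY D hD).2 (hpt D hD)
  choose! arc harcY harc using hX.arcwiseConnected_diff_endpoints
  have harcG : ∀ D ∈ G, ∀ D' ∈ G, D ≠ D' → arc (pt D) (pt D') ⊆ X \ Endpoints X ∧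
      IsArcWithEndpoints (arc (pt D) (pt D')) (pt D) (pt D') := fun D hD D' hD' hDD' =>
    have hne := (hGdisj hD hD' hDD').ne_of_mem (hpt D hD) (hpt D' hD')
    ⟨harcY _ (hptY D hD) _ (hptY D' hD') hne, harc _ (hptY D hD) _ (hptY D' hD') hne⟩
  set S := G ∪ (fun p => arc (pt p.1) (pt p.2)) '' {p ∈ G ×ˢ G | p.1 ≠ p.2}
  have hS : ∀ A ∈ S, IsArc A ∧ A ⊆ X \ Endpoints X := by
    rintro _ (hD | ⟨⟨D, D'⟩, ⟨⟨hD, hD'⟩, hDD'⟩, rfl⟩)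
    · exact hGY _ hD
    · exact ⟨⟨_, _, (harcG D hD D' hD' hDD').2⟩, (harcG D hD D' hD' hDD').1⟩
  refine ⟨S, hGc.union (((hGc.prod hGc).mono (sep_subset _ _)).image _),
    fun A hA => (hS A hA).1, Subset.antisymm (fun y hy => ?_)
    (sUnion_subset fun A hA => (hS A hA).2)⟩
  obtain ⟨w, ⟨D, hD, hwD⟩, w', ⟨D', hD', hwD'⟩, hy⟩ :=
    hX.exists_mem_forall_subcontinuum_mem (M := ⋃₀ G) (fun A hA hAY =>
      let ⟨D, hD, z, hzA, hzD⟩ := hGmax A ⟨hA, hAY⟩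
      ⟨z, hzA, D, hD, hzD⟩) hy
  obtain ⟨hDarc, hDY⟩ := hGY D hD
  obtain ⟨hDarc', hDY'⟩ := hGY D' hD'
  by_cases hDD' : D = D'
  · subst hDD'
    exact ⟨D, Or.inl hD,
      hy D (hDY.trans sdiff_subset) hDarc.isCompact hDarc.isConnected hwD hwD'⟩
  obtain ⟨hCY, hC⟩ := harcG D hD D' hD' hDD'
  have hKconn : IsConnected (D ∪ arc (pt D) (pt D') ∪ D') :=
    (hDarc.isConnected.union ⟨_, hpt D hD, hC.left_mem⟩ hC.isConnected).union
      ⟨_, Or.inr hC.right_mem, hpt D' hD'⟩ hDarc'.isConnected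
  rcases hy _ ((union_subset (union_subset hDY hCY) hDY').trans sdiff_subset)
    ((hDarc.isCompact.union hC.isCompact).union hDarc'.isCompact) hKconn
    (Or.inl (Or.inl hwD)) (Or.inr hwD') with (hyD | hyC) | hyD'
  · exact ⟨D, Or.inl hD, hyD⟩
  · exact ⟨_, Or.inr ⟨(D, D'), ⟨⟨hD, hD'⟩, hDD'⟩, rfl⟩, hyC⟩
  · exact ⟨D', Or.inl hD', hyD'⟩

lemma IsDendroid.exists_countable_sUnion_eq_diff_endpoints (hX : IsDendroid X)
    (hSus : IsSuslinian X) : ∃ S : Set (Set α), S.Countable ∧ (∀ A ∈ S, IsArc A) ∧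
      X \ Endpoints X = ⋃₀ S := by
  obtain ⟨G, hGY, hGdisj, hGmax⟩ := exists_pairwiseDisjoint_forall_inter_nonempty
    (p := fun A => IsArc A ∧ A ⊆ X \ Endpoints X) fun A hA => hA.1.nontrivial.nonempty
  refine hX.exists_countable_sUnion_eq_diff_endpoints_of_maximal
    (hSus G (fun D hD => ?_) hGdisj) hGY hGdisj hGmax
  obtain ⟨hD, hDY⟩ := hGY D hD
  exact ⟨hDY.trans sdiff_subset, hD.isCompact, hD.isConnected, hD.nontrivial⟩

end Suslinian

/-- Proposition 1, (1) ↔ (2). -/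
theorem stmt_5 {α : Type*} [MetricSpace α] (X : Set α) (hX : IsDendroid X) :
    IsSuslinian X ↔
      ∃ S : Set (Set α), S.Countable ∧ (∀ A ∈ S, IsArc A) ∧
        X \ Endpoints X = ⋃₀ S :=
  ⟨hX.exists_countable_sUnion_eq_diff_endpoints,
    fun ⟨_, hSc, hSarc, hSeq⟩ => hX.isSuslinian_of_diff_endpoints_eq_sUnion hSc hSarc hSeq⟩
end

section
/- Let X be a plane dendroid. Then X is non-Suslinian if and only if X contains a Cantor set of arcs, i.e., a continuous collection of pairwise-disjoint arcs whose decomposition space is a Cantor set. -/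
open Set Filter Topology

/-!
Every non-degenerate subcontinuum `K` of a dendroid contains an arc: the arc joining two points
of `K` meets `K` in a connected set by hereditary unicoherence, hence lies in `K`. So a
non-Suslinian dendroid carries an uncountable family of injective paths `[0, 1] → ℝ²` with
pairwise disjoint images, an uncountable subset of the separable complete space
`C([0, 1], ℝ²)`. A Cantor scheme built from condensation points of this family—at each stage two
uncountable pieces of small diameter, uniformly injective at the current scale, whose closures
consist of paths with disjoint images—converges along every branch of `ℕ → Bool` to an injective
path, continuously in the branch and with disjoint images for distinct branches. Conversely, a
Cantor set of arcs is an uncountable family of disjoint non-degenerate continua.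
-/

open TopologicalSpace Metric Function

section Arcs

variable {α : Type*} [TopologicalSpace α]

lemma isArc_range_of_injective (f : C(unitInterval, α)) (hf : Injective f) :
    IsArc (range f) := by
  refine ⟨f 0, f 1, fun r => f (projIcc 0 1 zero_le_one r),
    (f.continuous.comp continuous_projIcc).continuousOn, ?_, ?_, by simp, by simp⟩
  · intro s hs t ht hst
    simpa [projIcc_of_mem zero_le_one hs, projIcc_of_mem zero_le_one ht] using hf hst
  · refine Subset.antisymm (image_subset_iff.2 fun r _ => mem_range_self _) ?_
    rintro _ ⟨s, rfl⟩
    exact ⟨s, s.2, by simp⟩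

lemma IsArcWithEndpoints.exists_continuousMap {A : Set α} {a b : α}
    (h : IsArcWithEndpoints A a b) :
    ∃ g : C(unitInterval, α), Injective g ∧ range g = A ∧ g 0 = a ∧ g 1 = b := by
  obtain ⟨f, hfc, hfinj, rfl, rfl, rfl⟩ := h
  refine ⟨⟨(Icc 0 1).domRestrict f, hfc.domRestrict⟩,
    fun s t hst => Subtype.ext (hfinj s.2 t.2 hst), by rw [image_eq_range]; rfl, rfl, rfl⟩

lemma IsArc.isCompact_isConnected_nontrivial {A : Set α} (hA : IsArc A) :
    IsCompact A ∧ IsConnected A ∧ A.Nontrivial := by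
  obtain ⟨a, b, hA⟩ := hA
  obtain ⟨g, hg, rfl, -, -⟩ := hA.exists_continuousMap
  exact ⟨isCompact_range g.continuous, isConnected_range g.continuous,
    ⟨g 0, mem_range_self _, g 1, mem_range_self _, hg.ne (by simp)⟩⟩

end Arcs

lemma Pairwise.injective_of_forall_nonempty {ι β : Type*} {f : ι → Set β}
    (hdisj : Pairwise (Disjoint on f)) (hne : ∀ i, (f i).Nonempty) : Injective f :=
  fun i j hij => by
    by_contra h
    have := hdisj h
    simp only [onFun, hij, disjoint_self, bot_eq_empty] at this
    exact (hne j).ne_empty this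

section Dendroid

variable {α : Type*} [TopologicalSpace α] [T2Space α] {X K : Set α}

-- An injective path is an embedding, so it pulls the preconnected set `range g ∩ K` back to a
-- preconnected subset of `[0, 1]` containing both endpoints.
lemma HereditarilyUnicoherent.range_subset (hX : HereditarilyUnicoherent X)
    {g : C(unitInterval, α)} (hg : Injective g) (hgX : range g ⊆ X) (hKX : K ⊆ X)
    (hK : IsCompact K) (hKc : IsConnected K) (h0 : g 0 ∈ K) (h1 : g 1 ∈ K) : range g ⊆ K := by
  have hpre : IsPreconnected (g ⁻¹' K) := by
    rw [← (g.continuous.isClosedEmbedding hg).isInducing.isPreconnected_image,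
      image_preimage_eq_range_inter]
    exact hX _ _ hgX hKX (isCompact_range g.continuous) (isConnected_range g.continuous) hK hKc
  exact range_subset_iff.2 fun s => hpre.Icc_subset h0 h1 ⟨s.2.1, s.2.2⟩

lemma IsDendroid.exists_injective_range_subset (hX : IsDendroid X) (hKX : K ⊆ X)
    (hK : IsCompact K) (hKc : IsConnected K) (hKnt : K.Nontrivial) :
    ∃ g : C(unitInterval, α), Injective g ∧ range g ⊆ K := by
  obtain ⟨x, hx, y, hy, hxy⟩ := hKnt
  obtain ⟨A, hAX, hA⟩ := hX.2.2.2 x (hKX hx) y (hKX hy) hxy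
  obtain ⟨g, hg, rfl, rfl, rfl⟩ := hA.exists_continuousMap
  exact ⟨g, hg, hX.2.2.1.range_subset hg hAX hKX hK hKc hx hy⟩

lemma IsDendroid.exists_arc_family_of_not_isSuslinian (hX : IsDendroid X)
    (hXS : ¬IsSuslinian X) :
    ∃ A : Set C(unitInterval, α), (∀ f ∈ A, Injective f) ∧
      A.Pairwise (Disjoint on fun f => range f) ∧ ¬A.Countable ∧ ∀ f ∈ A, range f ⊆ X := by
  simp only [IsSuslinian, not_forall] at hXS
  obtain ⟨S, hS, hSdisj, hSunc⟩ := hXS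
  choose g hg hgK using fun K : S =>
    hX.exists_injective_range_subset (hS K K.2).1 (hS K K.2).2.1 (hS K K.2).2.2.1 (hS K K.2).2.2.2
  have hdisj : Pairwise (Disjoint on fun K => range (g K)) := fun K L hKL =>
    (hSdisj K.2 L.2 (Subtype.coe_ne_coe.2 hKL)).mono (hgK K) (hgK L)
  have hginj : Injective g := Injective.of_comp (f := fun h : C(unitInterval, α) => range h)
    (hdisj.injective_of_forall_nonempty fun K => range_nonempty (g K))
  refine ⟨range g, forall_mem_range.2 hg, ?_, ?_,
    forall_mem_range.2 fun K => (hgK K).trans (hS K K.2).1⟩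
  · rintro _ ⟨K, rfl⟩ _ ⟨L, rfl⟩ hne
    exact hdisj (ne_of_apply_ne g hne)
  · intro h
    rw [← image_univ] at h
    exact hSunc (countable_coe_iff.1 (countable_univ_iff.1
      (countable_of_injective_of_countable_image hginj.injOn h)))

end Dendroid

section Condensation

variable {β : Type*} [TopologicalSpace β] [SecondCountableTopology β]

lemma countable_setOf_exists_nhds_countable (S : Set β) :
    {x ∈ S | ∃ U ∈ 𝓝 x, (S ∩ U).Countable}.Countable := by
  refine ((countable_countableBasis β).mono (sep_subset _ fun V => (S ∩ V).Countable)
    |>.biUnion fun V hV => hV.2).mono ?_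
  rintro x ⟨hxS, U, hU, hSU⟩
  obtain ⟨V, hV, hxV, hVU⟩ := (isBasis_countableBasis β).mem_nhds_iff.1 hU
  exact mem_biUnion ⟨hV, hSU.mono (inter_subset_inter_right S hVU)⟩ ⟨hxS, hxV⟩

lemma exists_ne_of_forall_nhds_not_countable {S : Set β} (hS : ¬S.Countable) :
    ∃ x ∈ S, ∃ y ∈ S, x ≠ y ∧ (∀ U ∈ 𝓝 x, ¬(S ∩ U).Countable) ∧
      ∀ U ∈ 𝓝 y, ¬(S ∩ U).Countable := by
  set T := {x ∈ S | ∀ U ∈ 𝓝 x, ¬(S ∩ U).Countable}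
  have hT : ¬T.Countable := fun hT => hS <| (hT.union
    (countable_setOf_exists_nhds_countable S)).mono fun x hx => by
      by_cases h : ∀ U ∈ 𝓝 x, ¬(S ∩ U).Countable
      · exact Or.inl ⟨hx, h⟩
      · push Not at h
        exact Or.inr ⟨hx, h⟩
  obtain ⟨x, hx, y, hy, hxy⟩ := not_subsingleton_iff.1 fun h => hT h.countable
  exact ⟨x, hx.1, y, hy.1, hxy, hx.2, hy.2⟩

end Condensation

lemma ContinuousMap.isClosed_setOf_range_subset {K E : Type*} [TopologicalSpace K]
    [TopologicalSpace E] {X : Set E} (hX : IsClosed X) : IsClosed {f : C(K, E) | range f ⊆ X} := by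
  simp only [range_subset_iff, ofPred_forall]
  exact isClosed_iInter fun s => hX.preimage (continuous_eval_const s)

lemma ContinuousMap.isClosed_setOf_le_dist_apply {K E : Type*} [PseudoMetricSpace K]
    [PseudoMetricSpace E] (ε γ : ℝ) :
    IsClosed {f : C(K, E) | ∀ s t, ε ≤ dist s t → γ ≤ dist (f s) (f t)} := by
  simp only [ofPred_forall]
  exact isClosed_iInter fun s => isClosed_iInter fun t => isClosed_iInter fun _ =>
    isClosed_le continuous_const (by fun_prop)

section CantorFamily

open CantorScheme PiNat

variable {K E : Type*} [MetricSpace K] [CompactSpace K] [MetricSpace E]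

lemma ContinuousMap.exists_pos_le_dist_apply_of_injective {f : C(K, E)} (hf : Injective f)
    {ε : ℝ} (hε : 0 < ε) : ∃ γ > 0, ∀ s t, ε ≤ dist s t → γ ≤ dist (f s) (f t) := by
  set T := {p : K × K | ε ≤ dist p.1 p.2}
  have hT : IsCompact T := (isClosed_le continuous_const continuous_dist).isCompact
  rcases T.eq_empty_or_nonempty with hTe | hTne
  · exact ⟨1, one_pos, fun s t hst => (hTe ▸ hst : (s, t) ∈ (∅ : Set (K × K))).elim⟩
  obtain ⟨p, hpT, hp⟩ := hT.exists_isMinOn hTne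
    (continuous_dist.comp (f.continuous.prodMap f.continuous)).continuousOn
  refine ⟨dist (f p.1) (f p.2), dist_pos.2 fun h => ?_, fun s t hst => hp (a := (s, t)) hst⟩
  have : ε ≤ dist p.1 p.2 := hpT
  rw [hf h, dist_self] at this
  linarith

lemma ContinuousMap.exists_pos_le_dist_apply_of_disjoint_range {f g : C(K, E)}
    (h : Disjoint (range f) (range g)) : ∃ ζ > 0, ∀ s t, ζ ≤ dist (f s) (g t) := by
  obtain ⟨ζ, hζ, hdisj⟩ :=
    h.exists_cthickenings (isCompact_range f.continuous) (isCompact_range g.continuous).isClosed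
  refine ⟨ζ, hζ, fun s t => le_of_not_gt fun hlt => disjoint_left.1 hdisj
    (mem_cthickening_of_dist_le (g t) (f s) ζ _ (mem_range_self s) ?_)
    (self_subset_cthickening _ (mem_range_self t))⟩
  rw [dist_comm]
  exact hlt.le

lemma ContinuousMap.disjoint_range_of_dist_le {f g f₀ g₀ : C(K, E)} {ζ r : ℝ}
    (hgap : ∀ s t, ζ ≤ dist (f₀ s) (g₀ t)) (hf : dist f f₀ ≤ r) (hg : dist g g₀ ≤ r)
    (hr : 2 * r < ζ) : Disjoint (range f) (range g) := by
  rw [disjoint_left]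
  rintro _ ⟨s, rfl⟩ ⟨t, ht⟩
  have h₁ := (dist_apply_le_dist (f := f) (g := f₀) s).trans hf
  have h₂ := (dist_apply_le_dist (f := g) (g := g₀) t).trans hg
  rw [ht] at h₂
  linarith [hgap s t, dist_triangle (f₀ s) (f s) (g₀ t), dist_comm (f s) (f₀ s)]

lemma exists_pos_not_countable_setOf_le_dist_apply {A : Set C(K, E)}
    (hinj : ∀ f ∈ A, Injective f) (hA : ¬A.Countable) {ε : ℝ} (hε : 0 < ε) :
    ∃ γ > 0, ¬{f ∈ A | ∀ s t, ε ≤ dist s t → γ ≤ dist (f s) (f t)}.Countable := by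
  by_contra! h
  refine hA ((countable_iUnion fun n : ℕ => h (1 / (n + 1)) Nat.one_div_pos_of_nat).mono
    fun f hf => ?_)
  obtain ⟨γ, hγ, hfγ⟩ := (f.exists_pos_le_dist_apply_of_injective (hinj f hf) hε)
  obtain ⟨n, hn⟩ := exists_nat_one_div_lt hγ
  exact mem_iUnion.2 ⟨n, hf, fun s t hst => hn.le.trans (hfγ s t hst)⟩

structure IsDisjointArcScheme (A : Set C(K, E)) (D : List Bool → Set C(K, E)) : Prop where
  isClosed : ∀ l, IsClosed (D l)
  nonempty : ∀ l, (D l).Nonempty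
  nil_subset : D [] ⊆ closure A
  cons_subset : ∀ l a, D (a :: l) ⊆ D l
  ediam_cons_le : ∀ l a, ediam (D (a :: l)) ≤ ENNReal.ofReal ((1 / 2) ^ l.length)
  ne_of_le_dist : ∀ l a, ∀ f ∈ D (a :: l), ∀ s t, (1 / 2) ^ l.length ≤ dist s t → f s ≠ f t
  disjoint_range : ∀ l a b, a ≠ b → ∀ f ∈ D (a :: l), ∀ g ∈ D (b :: l),
    Disjoint (range f) (range g)

namespace IsDisjointArcScheme

variable {A : Set C(K, E)} {D : List Bool → Set C(K, E)}

lemma vanishingDiam (hD : IsDisjointArcScheme A D) : VanishingDiam D := by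
  intro c
  rw [← tendsto_add_atTop_iff_nat 1]
  have hlim : Tendsto (fun n : ℕ => ENNReal.ofReal ((1 / 2) ^ n)) atTop (𝓝 0) := by
    simpa using ENNReal.tendsto_ofReal
      (tendsto_pow_atTop_nhds_zero_of_lt_one (by norm_num) (by norm_num : (1 / 2 : ℝ) < 1))
  refine tendsto_of_tendsto_of_tendsto_of_le_of_le tendsto_const_nhds hlim (fun _ => zero_le)
    fun n => ?_
  simpa [res_succ, res_length] using hD.ediam_cons_le (res c n) (c n)

lemma injective_of_forall_mem (hD : IsDisjointArcScheme A D) {c : ℕ → Bool} {f : C(K, E)}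
    (hf : ∀ n, f ∈ D (res c n)) : Injective f := by
  intro s t hst
  by_contra hne
  obtain ⟨n, hn⟩ := exists_pow_lt_of_lt_one (dist_pos.2 hne) (by norm_num : (1 / 2 : ℝ) < 1)
  exact hD.ne_of_le_dist (res c n) (c n) f (hf (n + 1)) s t (by rw [res_length]; exact hn.le) hst

lemma disjoint_range_of_forall_mem (hD : IsDisjointArcScheme A D) {c d : ℕ → Bool} (hcd : c ≠ d)
    {f g : C(K, E)} (hf : ∀ n, f ∈ D (res c n)) (hg : ∀ n, g ∈ D (res d n)) :
    Disjoint (range f) (range g) := by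
  have hres : res c (firstDiff c d) = res d (firstDiff c d) :=
    res_eq_res.2 fun _ hm => apply_eq_of_lt_firstDiff hm
  have hf' := hf (firstDiff c d + 1)
  have hg' := hg (firstDiff c d + 1)
  rw [res_succ] at hf'
  rw [res_succ, ← hres] at hg'
  exact hD.disjoint_range _ _ _ (apply_firstDiff_ne hcd) f hf' g hg'

end IsDisjointArcScheme

variable [SecondCountableTopology E]

-- The two pieces are small balls around two condensation points of the arcs that are
-- uniformly injective at scale `ε`; both conditions pass to closures.
lemma exists_small_diam_splitting {A : Set C(K, E)} (hinj : ∀ f ∈ A, Injective f)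
    (hdisj : A.Pairwise (Disjoint on fun f => range f)) (hA : ¬A.Countable) {ε : ℝ}
    (hε : 0 < ε) :
    ∃ B : Bool → Set C(K, E),
      (∀ i, B i ⊆ A ∧ ¬(B i).Countable ∧ ediam (B i) ≤ ENNReal.ofReal ε ∧
        ∀ f ∈ closure (B i), ∀ s t, ε ≤ dist s t → f s ≠ f t) ∧
      ∀ i j, i ≠ j → ∀ f ∈ closure (B i), ∀ g ∈ closure (B j), Disjoint (range f) (range g) := by
  obtain ⟨γ, hγ, hAγ⟩ := exists_pos_not_countable_setOf_le_dist_apply hinj hA hε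
  set A' := {f ∈ A | ∀ s t, ε ≤ dist s t → γ ≤ dist (f s) (f t)}
  obtain ⟨g₀, hg₀, g₁, hg₁, hne, hc₀, hc₁⟩ := exists_ne_of_forall_nhds_not_countable hAγ
  obtain ⟨ζ, hζ, hgap⟩ :=
    ContinuousMap.exists_pos_le_dist_apply_of_disjoint_range (hdisj hg₀.1 hg₁.1 hne)
  set r := min (ε / 2) (ζ / 3)
  have hr : 0 < r := by positivity
  set g : Bool → C(K, E) := fun i => bif i then g₁ else g₀
  have hclosure : ∀ i, closure (A' ∩ ball (g i) r) ⊆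
      {f | ∀ s t, ε ≤ dist s t → γ ≤ dist (f s) (f t)} ∩ closedBall (g i) r := fun i =>
    closure_minimal (inter_subset_inter (fun f hf => hf.2) ball_subset_closedBall)
      ((ContinuousMap.isClosed_setOf_le_dist_apply ε γ).inter isClosed_closedBall)
  have h2r : 2 * r < ζ := by linarith [min_le_right (ε / 2) (ζ / 3)]
  refine ⟨fun i => A' ∩ ball (g i) r,
    fun i => ⟨inter_subset_left.trans (sep_subset _ _), ?_, ?_, ?_⟩, ?_⟩
  · cases i
    · exact hc₀ _ (ball_mem_nhds _ hr)
    · exact hc₁ _ (ball_mem_nhds _ hr)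
  · refine ediam_le_of_forall_dist_le fun f hf f' hf' => ?_
    linarith [dist_triangle_right f f' (g i), mem_ball.1 hf.2, mem_ball.1 hf'.2,
      min_le_left (ε / 2) (ζ / 3)]
  · exact fun f hf s t hst => dist_pos.1 (hγ.trans_le ((hclosure i hf).1 s t hst))
  · intro i j hij f hf f' hf'
    cases i <;> cases j <;> simp only [ne_eq, not_true_eq_false] at hij
    · exact ContinuousMap.disjoint_range_of_dist_le hgap (hclosure false hf).2
        (hclosure true hf').2 h2r
    · exact ContinuousMap.disjoint_range_of_dist_le
        (fun s t => dist_comm (g₀ t) (g₁ s) ▸ hgap t s) (hclosure true hf).2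
        (hclosure false hf').2 h2r

lemma exists_isDisjointArcScheme {A : Set C(K, E)} (hinj : ∀ f ∈ A, Injective f)
    (hdisj : A.Pairwise (Disjoint on fun f => range f)) (hA : ¬A.Countable) :
    ∃ D, IsDisjointArcScheme A D := by
  choose B hB hBdisj using fun (A' : Set C(K, E)) (hA' : A' ⊆ A ∧ ¬A'.Countable) (n : ℕ) =>
    exists_small_diam_splitting (fun f hf => hinj f (hA'.1 hf)) (hdisj.mono hA'.1) hA'.2
      (ε := (1 / 2) ^ n) (by positivity)
  let node : List Bool → {A' : Set C(K, E) // A' ⊆ A ∧ ¬A'.Countable} := fun l =>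
    l.rec ⟨A, subset_rfl, hA⟩ fun a l N =>
      ⟨B N.1 N.2 l.length a, (hB _ _ _ a).1.trans N.2.1, (hB _ _ _ a).2.1⟩
  refine ⟨fun l => closure (node l).1, ⟨fun l => isClosed_closure, fun l => ?_, subset_rfl,
    fun l a => closure_mono (hB _ _ _ a).1, fun l a => ?_, fun l a => (hB _ _ _ a).2.2.2,
    fun l a b hab => hBdisj _ _ _ a b hab⟩⟩
  · refine (nonempty_iff_ne_empty.2 fun h => (node l).2.2 ?_).closure
    rw [h]
    exact countable_empty
  · rw [ediam_closure]
    exact (hB _ _ _ a).2.2.1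

theorem exists_continuous_pairwise_disjoint_range_of_not_countable [CompleteSpace E]
    {A : Set C(K, E)} (hinj : ∀ f ∈ A, Injective f)
    (hdisj : A.Pairwise (Disjoint on fun f => range f)) (hA : ¬A.Countable) :
    ∃ Φ : (ℕ → Bool) → C(K, E), Continuous Φ ∧ (∀ c, Φ c ∈ closure A) ∧
      (∀ c, Injective (Φ c)) ∧ Pairwise (Disjoint on fun c => range (Φ c)) := by
  obtain ⟨D, hD⟩ := exists_isDisjointArcScheme hinj hdisj hA
  have hdom := (CantorScheme.Antitone.closureAntitone hD.cons_subset hD.isClosed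
    ).map_of_vanishingDiam hD.vanishingDiam hD.nonempty
  let Φ c := (inducedMap D).2 ⟨c, hdom ▸ mem_univ c⟩
  have hΦ : ∀ c n, Φ c ∈ D (res c n) := fun c n => map_mem _ n
  exact ⟨Φ, hD.vanishingDiam.map_continuous.comp (by fun_prop),
    fun c => hD.nil_subset (hΦ c 0), fun c => hD.injective_of_forall_mem (hΦ c),
    fun c d hcd => hD.disjoint_range_of_forall_mem hcd (hΦ c) (hΦ d)⟩

end CantorFamily

namespace ContinuousMap

variable {K E : Type*} [TopologicalSpace K] [CompactSpace K] [Nonempty K] [MetricSpace E]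

def rangeNonemptyCompacts (f : C(K, E)) : NonemptyCompacts E :=
  ⟨⟨range f, isCompact_range f.continuous⟩, range_nonempty f⟩

lemma continuous_rangeNonemptyCompacts :
    Continuous (rangeNonemptyCompacts : C(K, E) → NonemptyCompacts E) :=
  LipschitzWith.continuous (K := 1) <| LipschitzWith.of_dist_le_mul fun f g => by
    rw [NNReal.coe_one, one_mul, NonemptyCompacts.dist_eq]
    refine hausdorffDist_le_of_mem_dist dist_nonneg ?_ ?_
    · rintro _ ⟨s, rfl⟩
      exact ⟨g s, mem_range_self s, dist_apply_le_dist s⟩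
    · rintro _ ⟨s, rfl⟩
      exact ⟨f s, mem_range_self s, dist_comm (f s) (g s) ▸ dist_apply_le_dist s⟩

end ContinuousMap

instance : Uncountable (ℕ → Bool) := by
  rw [← not_countable_iff, ← Cardinal.mk_le_aleph0_iff, not_le]
  simpa using Cardinal.cantor Cardinal.aleph0

lemma not_isSuslinian_of_pairwise_disjoint {α ι : Type*} [TopologicalSpace α] [Uncountable ι]
    {X : Set α} {F : ι → Set α} (hF : ∀ i, IsArc (F i) ∧ F i ⊆ X)
    (hdisj : Pairwise (Disjoint on F)) : ¬IsSuslinian X := by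
  intro hX
  have hinj : Injective F := hdisj.injective_of_forall_nonempty fun i =>
    (hF i).1.isCompact_isConnected_nontrivial.2.2.nonempty
  refine not_countable_univ (countable_of_injective_of_countable_image hinj.injOn ?_)
  rw [image_univ]
  refine hX _ ?_ ?_
  · rintro _ ⟨i, rfl⟩
    exact ⟨(hF i).2, (hF i).1.isCompact_isConnected_nontrivial⟩
  · rintro _ ⟨i, rfl⟩ _ ⟨j, rfl⟩ hne
    exact hdisj (ne_of_apply_ne F hne)

/-- Proposition 2: a plane dendroid is non-Suslinian iff it contains a
Cantor set of arcs, i.e. a continuous (in the Hausdorff metric) pairwise-disjoint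
family of arcs indexed by the Cantor space. -/
theorem stmt_9 (X : Set Plane) (hX : IsDendroid X) :
    ¬ IsSuslinian X ↔
      ∃ F : (ℕ → Bool) → TopologicalSpace.NonemptyCompacts Plane,
        Continuous F ∧
        (∀ c, IsArc (F c : Set Plane) ∧ (F c : Set Plane) ⊆ X) ∧
        (∀ c d, c ≠ d → Disjoint (F c : Set Plane) (F d : Set Plane)) := by
  refine ⟨fun hXS => ?_, fun ⟨F, _, hF, hdisj⟩ => not_isSuslinian_of_pairwise_disjoint hF hdisj⟩
  obtain ⟨A, hinj, hdisj, hA, hAX⟩ := hX.exists_arc_family_of_not_isSuslinian hXS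
  obtain ⟨Φ, hΦ, hΦA, hΦinj, hΦdisj⟩ :=
    exists_continuous_pairwise_disjoint_range_of_not_countable hinj hdisj hA
  refine ⟨fun c => (Φ c).rangeNonemptyCompacts,
    ContinuousMap.continuous_rangeNonemptyCompacts.comp hΦ,
    fun c => ⟨isArc_range_of_injective _ (hΦinj c), ?_⟩, fun c d hcd => hΦdisj hcd⟩
  exact closure_minimal hAX (ContinuousMap.isClosed_setOf_range_subset hX.1.isClosed) (hΦA c)
end

section
/- Let X be a topological space, Q a quasicomponent of X, and p ∈ X. Suppose U is open in X with ∂U ⊂ Q, |∂U| = 2, and U \ {p} is a non-empty subset of Q. Then Q contains a non-degenerate connected subset of X. -/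
open Set Filter Topology

/-!
Shrink `U` to an open `V ⊆ U` with `closure V ⊆ Q` and `frontier V ⊆ frontier U`, avoiding `p`
with a clopen set when `p ∉ Q`. A nonempty set that is clopen in `closure V` and misses
`frontier V` lies in `V`, so it is clopen in `X` and would swallow the quasicomponent `Q`, which
is not contained in `V ⊆ U` (it contains the frontier of `U`). Hence every nonempty clopen piece
of `closure V` meets the two-point set `frontier V`. Either `closure V` is connected, or it splits
into two clopen pieces, each meeting `frontier V` in exactly one point; a piece meeting
`frontier V` only in `c` has no clopen subsets avoiding `c`, so it is connected. The chosen set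
is non-degenerate because it is a neighbourhood of a point of `closure V \ V` in `closure V`.
-/

section

variable {α : Type*} [TopologicalSpace α]

namespace IsClopenIn

variable {Y Z A : Set α}

lemma self (Y : Set α) : IsClopenIn Y Y :=
  ⟨subset_rfl, ⟨univ, isOpen_univ, (inter_univ Y).symm⟩, ⟨univ, isClosed_univ, (inter_univ Y).symm⟩⟩

lemma trans (hZ : IsClopenIn Y Z) (hA : IsClopenIn Z A) : IsClopenIn Y A := by
  obtain ⟨hZY, ⟨O, hO, rfl⟩, ⟨C, hC, hZC⟩⟩ := hZ
  obtain ⟨hAZ, ⟨O', hO', rfl⟩, ⟨C', hC', hAC'⟩⟩ := hA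
  refine ⟨hAZ.trans hZY, ⟨O ∩ O', hO.inter hO', inter_assoc _ _ _⟩,
    ⟨C ∩ C', hC.inter hC', ?_⟩⟩
  rw [hAC', hZC, inter_assoc]

lemma isClosed (hA : IsClopenIn Y A) (hY : IsClosed Y) : IsClosed A := by
  obtain ⟨-, -, ⟨C, hC, rfl⟩⟩ := hA
  exact hY.inter hC

lemma isOpen_of_subset {V : Set α} (hA : IsClopenIn Y A) (hV : IsOpen V) (hAV : A ⊆ V)
    (hVY : V ⊆ Y) : IsOpen A := by
  obtain ⟨-, ⟨O, hO, rfl⟩, -⟩ := hA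
  convert hV.inter hO using 1
  exact subset_antisymm (subset_inter hAV inter_subset_right)
    (inter_subset_inter_left O hVY)

lemma nontrivial_of_mem_frontier {V : Set α} {c : α} (hZ : IsClopenIn (closure V) Z)
    (hV : IsOpen V) (hc : c ∈ Z) (hcV : c ∈ frontier V) : Z.Nontrivial := by
  obtain ⟨-, ⟨O, hO, rfl⟩, -⟩ := hZ
  obtain ⟨w, hwO, hwV⟩ := mem_closure_iff.mp hc.1 O hO hc.2
  have hcV' : c ∉ V := by
    rw [hV.frontier_eq] at hcV
    exact hcV.2
  exact ⟨c, hc, w, ⟨subset_closure hwV, hwO⟩, fun h => hcV' (h ▸ hwV)⟩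

end IsClopenIn

lemma isClopenIn_inter_of_subset_union {s u v : Set α} (hu : IsOpen u) (hv : IsOpen v)
    (hs : s ⊆ u ∪ v) (huv : s ∩ (u ∩ v) = ∅) : IsClopenIn s (s ∩ u) := by
  refine ⟨inter_subset_left, ⟨u, hu, rfl⟩, ⟨vᶜ, hv.isClosed_compl, ?_⟩⟩
  ext y
  constructor
  · rintro ⟨hys, hyu⟩
    exact ⟨hys, fun hyv => (huv.subset ⟨hys, hyu, hyv⟩ :)⟩
  · rintro ⟨hys, hyv⟩
    exact ⟨hys, (hs hys).resolve_right hyv⟩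

lemma isPreconnected_of_forall_isClopenIn_eq_empty {Z : Set α} (c : α)
    (h : ∀ A, IsClopenIn Z A → c ∉ A → A = ∅) : IsPreconnected Z := by
  rw [isPreconnected_iff_subset_of_disjoint]
  intro u v hu hv hZ huv
  have hZu := isClopenIn_inter_of_subset_union hu hv hZ huv
  have hZv := isClopenIn_inter_of_subset_union hv hu (union_comm u v ▸ hZ)
    (inter_comm u v ▸ huv)
  by_cases hcu : c ∈ u
  · left
    have hv_empty : Z ∩ v = ∅ :=
      h _ hZv fun hc => (huv.subset ⟨hc.1, hcu, hc.2⟩ :)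
    exact fun y hy => (hZ hy).resolve_right fun hyv => (hv_empty.subset ⟨hy, hyv⟩ :)
  · right
    have hu_empty : Z ∩ u = ∅ := h _ hZu fun hc => hcu hc.2
    exact fun y hy => (hZ hy).resolve_left fun hyu => (hu_empty.subset ⟨hy, hyu⟩ :)

lemma exists_isClopenIn_isPreconnected_of_subset_pair {Y F : Set α} {a b : α}
    (hF : F ⊆ {a, b}) (hY : Y.Nonempty)
    (hmeet : ∀ A, IsClopenIn Y A → Disjoint A F → A = ∅) :
    ∃ Z, IsClopenIn Y Z ∧ IsPreconnected Z ∧ (Z ∩ F).Nonempty := by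
  have meets : ∀ A, IsClopenIn Y A → A.Nonempty → (A ∩ F).Nonempty := fun A hA hne =>
    not_disjoint_iff_nonempty_inter.mp fun hdis => hne.ne_empty (hmeet A hA hdis)
  by_cases hpre : IsPreconnected Y
  · exact ⟨Y, IsClopenIn.self Y, hpre, meets Y (IsClopenIn.self Y) hY⟩
  rw [isPreconnected_iff_subset_of_disjoint] at hpre
  simp only [not_forall, not_or] at hpre
  obtain ⟨u, v, hu, hv, hY, huv, hYu, hYv⟩ := hpre
  have hZ := isClopenIn_inter_of_subset_union hu hv hY huv
  have hZ' := isClopenIn_inter_of_subset_union hv hu (union_comm u v ▸ hY)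
    (inter_comm u v ▸ huv)
  obtain ⟨c, ⟨hcY, hcu⟩, hcF⟩ := meets _ hZ <| by
    obtain ⟨y, hyY, hyv⟩ := not_subset.mp hYv
    exact ⟨y, hyY, (hY hyY).resolve_right hyv⟩
  obtain ⟨c', ⟨hc'Y, hc'v⟩, hc'F⟩ := meets _ hZ' <| by
    obtain ⟨y, hyY, hyu⟩ := not_subset.mp hYu
    exact ⟨y, hyY, (hY hyY).resolve_left hyu⟩
  have hne_c' : ∀ d ∈ Y ∩ u, d ≠ c' := by
    rintro d ⟨hdY, hdu⟩ rfl
    exact (huv.subset ⟨hdY, hdu, hc'v⟩ :)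
  have hZF : Y ∩ u ∩ F ⊆ {c} := by
    rintro d ⟨hdZ, hdF⟩
    have hdc' := hne_c' d hdZ
    have hcc' := hne_c' c ⟨hcY, hcu⟩
    grind [hF hdF, hF hcF, hF hc'F]
  refine ⟨Y ∩ u, hZ, isPreconnected_of_forall_isClopenIn_eq_empty c fun A hA hcA => ?_,
    c, ⟨hcY, hcu⟩, hcF⟩
  refine hmeet A (hZ.trans hA) (disjoint_left.mpr fun d hdA hdF => hcA ?_)
  rwa [← mem_singleton_iff.mp (hZF ⟨hA.1 hdA, hdF⟩)]

def quasicomponent (x : α) : Set α :=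
  {y | ∀ A : Set α, IsClopen A → x ∈ A → y ∈ A}

lemma quasicomponent_subset_of_isClopen {x : α} {C : Set α} (hC : IsClopen C)
    (hCQ : (C ∩ quasicomponent x).Nonempty) : quasicomponent x ⊆ C := by
  obtain ⟨y, hyC, hyQ⟩ := hCQ
  intro z hz
  by_cases hx : x ∈ C
  · exact hz C hC hx
  · exact absurd hyC (hyQ Cᶜ hC.compl hx)

lemma exists_isClopen_quasicomponent_subset (x p : α) :
    ∃ A, IsClopen A ∧ quasicomponent x ⊆ A ∧ (p ∈ A → p ∈ quasicomponent x) := by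
  by_cases hp : p ∈ quasicomponent x
  · exact ⟨univ, isClopen_univ, subset_univ _, fun _ => hp⟩
  obtain ⟨A, hA, hxA, hpA⟩ : ∃ A, IsClopen A ∧ x ∈ A ∧ p ∉ A := by
    simpa [quasicomponent] using hp
  exact ⟨A, hA, fun y hy => hy A hA hxA, fun h => absurd h hpA⟩

lemma exists_isOpen_closure_subset_quasicomponent {x p : α} {U : Set α} (hU : IsOpen U)
    (hfr : frontier U ⊆ quasicomponent x) (hne : (U \ {p}).Nonempty)
    (hsub : U \ {p} ⊆ quasicomponent x) :
    ∃ V, IsOpen V ∧ V ⊆ U ∧ V.Nonempty ∧ closure V ⊆ quasicomponent x ∧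
      frontier V ⊆ frontier U := by
  obtain ⟨A, hA, hQA, hpA⟩ := exists_isClopen_quasicomponent_subset x p
  refine ⟨U ∩ A, hU.inter hA.isOpen, inter_subset_left, ?_, ?_, ?_⟩
  · obtain ⟨u, hu⟩ := hne
    exact ⟨u, hu.1, hQA (hsub hu)⟩
  · intro y hy
    obtain ⟨hyU, hyA⟩ := closure_inter_subset_inter_closure U A hy
    rw [hA.isClosed.closure_eq] at hyA
    by_cases hyU' : y ∈ U
    · by_cases hyp : y = p
      · exact hyp ▸ hpA (hyp ▸ hyA)
      · exact hsub ⟨hyU', hyp⟩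
    · exact hfr (hU.frontier_eq ▸ ⟨hyU, hyU'⟩)
  · intro y hy
    rcases frontier_inter_subset U A hy with h | h
    · exact h.1
    · exact (hA.frontier_eq ▸ h.2 : y ∈ (∅ : Set α)).elim

lemma IsClopenIn.eq_empty_of_disjoint_frontier {x : α} {V A : Set α} (hV : IsOpen V)
    (hVQ : closure V ⊆ quasicomponent x) (hQV : ¬quasicomponent x ⊆ V)
    (hA : IsClopenIn (closure V) A) (hAF : Disjoint A (frontier V)) : A = ∅ := by
  have hAV : A ⊆ V := fun y hy => by
    by_contra hyV
    exact disjoint_left.mp hAF hy (hV.frontier_eq ▸ ⟨hA.1 hy, hyV⟩)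
  have hAclopen : IsClopen A :=
    ⟨hA.isClosed isClosed_closure, hA.isOpen_of_subset hV hAV subset_closure⟩
  by_contra hne
  obtain ⟨y, hy⟩ := nonempty_iff_ne_empty.mpr hne
  exact hQV ((quasicomponent_subset_of_isClopen hAclopen ⟨y, hy, hVQ (hA.1 hy)⟩).trans hAV)

end

/-- Lemma 11. -/
theorem stmt_13 {X : Type*} [TopologicalSpace X] (Q : Set X)
    (hQ : ∃ x : X, Q = {y | ∀ A : Set X, IsClopen A → x ∈ A → y ∈ A})
    (p : X) (U : Set X) (hU : IsOpen U)
    (hfr : frontier U ⊆ Q) (hcard : (frontier U).encard = 2)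
    (hne : (U \ {p}).Nonempty) (hsub : U \ {p} ⊆ Q) :
    ∃ S : Set X, S ⊆ Q ∧ S.Nontrivial ∧ IsConnected S := by
  obtain ⟨x, rfl⟩ := hQ
  obtain ⟨a, b, -, hab⟩ := encard_eq_two.mp hcard
  obtain ⟨V, hVo, hVU, hVne, hVQ, hVfr⟩ :=
    exists_isOpen_closure_subset_quasicomponent (x := x) hU hfr hne hsub
  have haU : a ∉ U := (hU.frontier_eq ▸ hab ▸ mem_insert a {b} : a ∈ closure U \ U).2
  have hQV : ¬quasicomponent x ⊆ V := fun h => haU (hVU (h (hfr (hab ▸ mem_insert a {b}))))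
  obtain ⟨Z, hZ, hZpre, c, hcZ, hcF⟩ :=
    exists_isClopenIn_isPreconnected_of_subset_pair (hab ▸ hVfr) hVne.closure
      fun A hA hAF => hA.eq_empty_of_disjoint_frontier hVo hVQ hQV hAF
  exact ⟨Z, hZ.1.trans hVQ, hZ.nontrivial_of_mem_frontier hVo hcZ hcF, ⟨c, hcZ⟩, hZpre⟩
end

section
/- Let Z be a zero-dimensional separable metric space and φ : Z → [0,∞) an upper semi-continuous function. Then the graph of φ, as a subspace of Z × [0,∞), is almost zero-dimensional. -/
/-!
A neighbourhood of a point `(z, φ z)` of the graph contains one of the form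
`{p | p.1 ∈ C, a ≤ φ p.1}` with `C` clopen, `C ⊆ {φ < u}` and `a < φ z < u`; upper
semicontinuity is what makes `{φ < u}` open, so that such a `C` exists. The lower bound
`a ≤ φ p.1` is a closed condition on `p.1`, and in a zero-dimensional space every closed
set is an intersection of clopen sets; pulling these back along the continuous projection
of the graph onto `Z` exhibits the neighbourhood as an intersection of clopen sets.
-/

open Set Filter Topology

section CSet

variable {X Y : Type*} [TopologicalSpace X] [TopologicalSpace Y]

/-- A *C-set*: an intersection of clopen sets. -/
def IsCSet (s : Set X) : Prop :=
  ∃ 𝒞 : Set (Set X), (∀ C ∈ 𝒞, IsClopen C) ∧ s = ⋂₀ 𝒞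

theorem IsClopen.isCSet {s : Set X} (hs : IsClopen s) : IsCSet s :=
  ⟨{s}, by simpa using hs, (sInter_singleton s).symm⟩

namespace IsCSet

theorem inter {s t : Set X} (hs : IsCSet s) (ht : IsCSet t) : IsCSet (s ∩ t) := by
  obtain ⟨𝒞, h𝒞, rfl⟩ := hs
  obtain ⟨𝒟, h𝒟, rfl⟩ := ht
  exact ⟨𝒞 ∪ 𝒟, fun C hC => hC.elim (h𝒞 C) (h𝒟 C), (sInter_union 𝒞 𝒟).symm⟩

theorem preimage {f : X → Y} (hf : Continuous f) {s : Set Y} (hs : IsCSet s) :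
    IsCSet (f ⁻¹' s) := by
  obtain ⟨𝒞, h𝒞, rfl⟩ := hs
  refine ⟨Set.preimage f '' 𝒞, ?_, by rw [preimage_sInter, sInter_image]⟩
  rintro _ ⟨C, hC, rfl⟩
  exact (h𝒞 C hC).preimage hf

end IsCSet

theorem IsClosed.isCSet (hX : IsZeroDimensionalSpace X) {F : Set X} (hF : IsClosed F) :
    IsCSet F := by
  refine ⟨{C | IsClopen C ∧ F ⊆ C}, fun C hC => hC.1, ?_⟩
  refine (subset_sInter fun C hC => hC.2).antisymm fun x hx => by_contra fun hxF => ?_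
  obtain ⟨V, hV, hxV, hVF⟩ := hX x Fᶜ hF.isOpen_compl hxF
  exact hx Vᶜ ⟨hV.compl, subset_compl_comm.mp hVF⟩ hxV

end CSet

theorem IsZeroDimensionalSpace.isAlmostZeroDimensionalSpace_graph {Z α : Type*}
    [TopologicalSpace Z] [LinearOrder α] [TopologicalSpace α] [OrderTopology α]
    [DenselyOrdered α] [NoMinOrder α] [NoMaxOrder α] (hZ : IsZeroDimensionalSpace Z)
    {φ : Z → α} (hφ : UpperSemicontinuous φ) :
    IsAlmostZeroDimensionalSpace {q : Z × α | q.2 = φ q.1} := by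
  rintro ⟨⟨z, y⟩, hy : y = φ z⟩ U hU hxU
  subst hy
  obtain ⟨W, hW, rfl⟩ := isOpen_induced_iff.mp hU
  obtain ⟨s, v, hs, hv, hzs, hφv, hsvW⟩ := isOpen_prod_iff.mp hW z (φ z) hxU
  obtain ⟨l, u, ⟨hlφ, hφu⟩, hluv⟩ := mem_nhds_iff_exists_Ioo_subset.mp (hv.mem_nhds hφv)
  obtain ⟨a, hla, haφ⟩ := exists_between hlφ
  obtain ⟨C, hC, hzC, hCs⟩ :=
    hZ z (s ∩ φ ⁻¹' Iio u) (hs.inter (hφ.isOpen_preimage u)) ⟨hzs, hφu⟩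
  have hgraph (p : {q : Z × α | q.2 = φ q.1}) : (p : Z × α).2 = φ (p : Z × α).1 := p.2
  have hπ : Continuous fun p : {q : Z × α | q.2 = φ q.1} => (p : Z × α).1 :=
    continuous_fst.comp continuous_subtype_val
  refine ⟨(fun p => (p : Z × α).1) ⁻¹' (C ∩ φ ⁻¹' Ici a), ?nhds, ?subset,
    ((hC.isCSet.inter ((hφ.isClosed_preimage a).isCSet hZ)).preimage hπ)⟩
  case nhds =>
    have hopen : IsOpen (Subtype.val ⁻¹' (C ×ˢ Ioi a) : Set {q : Z × α | q.2 = φ q.1}) :=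
      (hC.isOpen.prod isOpen_Ioi).preimage continuous_subtype_val
    refine mem_of_superset (hopen.mem_nhds ⟨hzC, haφ⟩) fun p ⟨hpC, hpa⟩ => ⟨hpC, ?_⟩
    exact (hgraph p ▸ hpa : a < φ (p : Z × α).1).le
  case subset =>
    rintro p ⟨hpC, hpa⟩
    obtain ⟨hps, hpu⟩ := hCs hpC
    exact hsvW ⟨hps, hgraph p ▸ hluv ⟨hla.trans_le hpa, hpu⟩⟩

theorem stmt_15_general {Z : Type*} [MetricSpace Z]
    (hZ : IsZeroDimensionalSpace Z) (φ : Z → ℝ)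
    (husc : UpperSemicontinuous φ) :
    IsAlmostZeroDimensionalSpace ↥{q : Z × ℝ | q.2 = φ q.1} :=
  hZ.isAlmostZeroDimensionalSpace_graph husc

/-- Proposition: graph of a USC function over a zero-dimensional
domain is almost zero-dimensional. -/
theorem stmt_15 {Z : Type*} [MetricSpace Z] [TopologicalSpace.SeparableSpace Z]
    (hZ : IsZeroDimensionalSpace Z) (φ : Z → ℝ) (hnn : ∀ z, 0 ≤ φ z)
    (husc : UpperSemicontinuous φ) :
    IsAlmostZeroDimensionalSpace ↥{q : Z × ℝ | q.2 = φ q.1} :=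
  stmt_15_general hZ φ husc
end

section
/- Let C be the Cantor set, let 𝒞 = {Cₙ : n < ω} be a countable partition of C into closed sets, and let Aₙ be a closed subset of Cₙ for each n. Then for any ε > 0 there exists a null partition of C (a countable closed partition whose elements' diameters converge to 0) of mesh < ε, which refines 𝒞 and respects 𝒜 = {Aₙ : n < ω}. -/
open Set Filter Topology

/-!
Transport everything to Cantor space `ℕ → Bool` along the ternary-digit map, a continuous
injection onto `cantorC` sending cylinders of length `n` to sets of diameter at most `3⁻ⁿ`.
There, fix levels `K m ≥ m` with `3^(-K m) < ε`. A point `x ∈ 𝒞 m` is labelled by its prefix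
of length `K m` if `x ∈ A m`, and otherwise by its shortest prefix of length at least `K m`
whose cylinder misses `A m` (it exists because `A m` is closed). Each fibre of the labelling is
`𝒞 m` intersected with `A m ∩ cylinder` or with a whole cylinder, so it is closed and respects
`A m`; as there are finitely many labels of each length and `K m → ∞`, only finitely many
fibres have diameter above any `δ > 0`.
-/

open Function PiNat

noncomputable def cantorMap (y : ℕ → Bool) : ℝ :=
  Real.ofDigits fun i => cond (y i) (2 : Fin 3) 0

lemma continuous_cantorMap : Continuous cantorMap :=
  Real.continuous_ofDigits.comp (by fun_prop)

lemma cantorMap_injective : Injective cantorMap := fun _ _ h =>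
  cantorSetEquivNatToBool.symm.injective (Subtype.ext h)

lemma range_cantorMap : range cantorMap = cantorC := by
  ext x
  simp only [cantorC, cantorMap, Real.ofDigits, Real.ofDigitsTerm, mem_range]
  refine exists_congr fun a => ?_
  rw [eq_comm]
  congr! 3 with i
  cases a i <;> simp [div_eq_mul_inv]

lemma diam_image_cantorMap_le {S : Set (ℕ → Bool)} {x : ℕ → Bool} {n : ℕ}
    (hS : S ⊆ cylinder x n) : Metric.diam (cantorMap '' S) ≤ 3⁻¹ ^ n := by
  refine Metric.diam_le_of_forall_dist_le (by positivity) ?_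
  rintro _ ⟨y, hy, rfl⟩ _ ⟨z, hz, rfl⟩
  have hyz : ∀ i < n, cond (y i) (2 : Fin 3) 0 = cond (z i) 2 0 := fun i hi => by
    rw [hS hy i hi, hS hz i hi]
  simpa [Real.dist_eq, cantorMap] using Real.abs_ofDigits_sub_ofDigits_le hyz

lemma PiNat.isClosed_cylinder {E : ℕ → Type*} [∀ n, TopologicalSpace (E n)]
    [∀ n, DiscreteTopology (E n)] (x : ∀ n, E n) (n : ℕ) : IsClosed (cylinder x n) :=
  cylinder_eq_pi x n ▸ isClosed_set_pi fun _ _ => isClosed_discrete _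

section Label

variable {α : Type*} {s : Set (ℕ → α)} {K n : ℕ} {x y : ℕ → α}

noncomputable def avoidDepth (s : Set (ℕ → α)) (K : ℕ) (x : ℕ → α) : ℕ :=
  max K (shortestPrefixDiff x s)

lemma le_avoidDepth : K ≤ avoidDepth s K x := le_max_left _ _

lemma avoidDepth_of_mem (hx : x ∈ s) : avoidDepth s K x = K := by
  have : ¬∃ n, Disjoint s (cylinder x n) := fun ⟨n, hn⟩ =>
    hn.notMem_of_mem_left hx (self_mem_cylinder x n)
  simp [avoidDepth, shortestPrefixDiff, this]

lemma avoidDepth_le (hK : K ≤ n) (h : Disjoint s (cylinder x n)) : avoidDepth s K x ≤ n := by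
  classical
  refine max_le hK ?_
  rw [shortestPrefixDiff, dif_pos ⟨n, h⟩]
  exact Nat.find_min' _ h

open scoped Classical in
noncomputable def cylinderLabel (s : Set (ℕ → α)) (K : ℕ) (x : ℕ → α) : Bool × List α :=
  (decide (x ∈ s), res x (avoidDepth s K x))

lemma mem_cylinder_of_cylinderLabel_eq (h : cylinderLabel s K y = cylinderLabel s K x) :
    y ∈ cylinder x (cylinderLabel s K x).2.length := by
  have hres : res y (avoidDepth s K y) = res x (avoidDepth s K x) := congrArg Prod.snd h
  have hdepth : avoidDepth s K y = avoidDepth s K x := by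
    simpa using congrArg List.length hres
  rw [cylinderLabel, res_length, cylinder_eq_res, mem_ofPred_eq, ← hres, hdepth]

lemma le_length_cylinderLabel : K ≤ (cylinderLabel s K x).2.length := by
  simpa [cylinderLabel] using le_avoidDepth

lemma cylinderLabel_eq_iff_of_mem (hx : x ∈ s) :
    cylinderLabel s K y = cylinderLabel s K x ↔ y ∈ s ∩ cylinder x K := by
  constructor
  · intro h
    have hy := mem_cylinder_of_cylinderLabel_eq h
    rw [cylinderLabel, res_length, avoidDepth_of_mem hx] at hy
    exact ⟨by simpa [cylinderLabel, hx] using congrArg Prod.fst h, hy⟩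
  · rintro ⟨hys, hy⟩
    rw [cylinder_eq_res] at hy
    simp [cylinderLabel, hx, hys, avoidDepth_of_mem, hy.out]

lemma cylinderLabel_fiber_subset_or_disjoint (i : Bool × List α) :
    cylinderLabel s K ⁻¹' {i} ⊆ s ∨ Disjoint (cylinderLabel s K ⁻¹' {i}) s := by
  rcases i with ⟨_ | _, w⟩
  · exact Or.inr (disjoint_left.2 fun y hy hys => by simp [cylinderLabel, hys] at hy)
  · exact Or.inl fun y hy => by simpa [cylinderLabel] using congrArg Prod.fst hy

variable [TopologicalSpace α] [DiscreteTopology α]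

lemma disjoint_cylinder_avoidDepth (hs : IsClosed s) (hx : x ∉ s) :
    Disjoint s (cylinder x (avoidDepth s K x)) := by
  classical
  have h := exists_disjoint_cylinder hs hx
  refine (Disjoint.mono_right (cylinder_anti x (le_max_right _ _)) ?_)
  rw [shortestPrefixDiff, dif_pos h]
  exact Nat.find_spec h

lemma avoidDepth_eq_of_mem_cylinder (hs : IsClosed s) (hx : x ∉ s)
    (hy : y ∈ cylinder x (avoidDepth s K x)) : avoidDepth s K y = avoidDepth s K x := by
  have hle : avoidDepth s K y ≤ avoidDepth s K x :=
    avoidDepth_le le_avoidDepth (mem_cylinder_iff_eq.1 hy ▸ disjoint_cylinder_avoidDepth hs hx)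
  have hys : y ∉ s := (disjoint_cylinder_avoidDepth hs hx).notMem_of_mem_right hy
  have hy' : y ∈ cylinder x (avoidDepth s K y) := cylinder_anti x hle hy
  exact le_antisymm hle (avoidDepth_le le_avoidDepth
    (mem_cylinder_iff_eq.1 hy' ▸ disjoint_cylinder_avoidDepth hs hys))

lemma cylinderLabel_eq_iff_of_notMem (hs : IsClosed s) (hx : x ∉ s) :
    cylinderLabel s K y = cylinderLabel s K x ↔ y ∈ cylinder x (avoidDepth s K x) := by
  refine ⟨fun h => by simpa [cylinderLabel] using mem_cylinder_of_cylinderLabel_eq h, fun hy => ?_⟩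
  have hys : y ∉ s := (disjoint_cylinder_avoidDepth hs hx).notMem_of_mem_right hy
  have hdepth := avoidDepth_eq_of_mem_cylinder hs hx hy
  rw [cylinder_eq_res] at hy
  simp [cylinderLabel, hx, hys, hdepth, hy.out]

lemma isClosed_cylinderLabel_fiber (hs : IsClosed s) (i : Bool × List α) :
    IsClosed (cylinderLabel s K ⁻¹' {i}) := by
  rcases eq_empty_or_nonempty (cylinderLabel s K ⁻¹' {i}) with h | ⟨x, hx⟩
  · exact h ▸ isClosed_empty
  rw [mem_preimage, mem_singleton_iff] at hx
  subst hx
  by_cases hxs : x ∈ s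
  · rw [show cylinderLabel s K ⁻¹' {cylinderLabel s K x} = s ∩ cylinder x K from
      ext fun y => cylinderLabel_eq_iff_of_mem hxs]
    exact hs.inter (PiNat.isClosed_cylinder x K)
  · rw [show cylinderLabel s K ⁻¹' {cylinderLabel s K x} = cylinder x (avoidDepth s K x) from
      ext fun y => cylinderLabel_eq_iff_of_notMem hs hxs]
    exact PiNat.isClosed_cylinder x _

end Label

section RefinedPiece

variable {α : Type*} {𝒞 A : ℕ → Set (ℕ → α)} {K : ℕ → ℕ} {i : ℕ × Bool × List α} {x : ℕ → α}

variable (𝒞 A K) in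
def refinedPiece (i : ℕ × Bool × List α) : Set (ℕ → α) :=
  𝒞 i.1 ∩ cylinderLabel (A i.1) (K i.1) ⁻¹' {i.2}

lemma iUnion_refinedPiece (h𝒞 : ⋃ m, 𝒞 m = univ) : ⋃ i, refinedPiece 𝒞 A K i = univ := by
  refine eq_univ_of_forall fun x => ?_
  obtain ⟨m, hm⟩ := mem_iUnion.1 (h𝒞 ▸ mem_univ x)
  exact mem_iUnion.2 ⟨(m, cylinderLabel (A m) (K m) x), hm, rfl⟩

lemma pairwise_disjoint_refinedPiece (h𝒞 : Pairwise (Disjoint on 𝒞)) :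
    Pairwise (Disjoint on refinedPiece 𝒞 A K) := by
  rintro ⟨m, j⟩ ⟨m', j'⟩ hne
  by_cases hm : m = m'
  · subst hm
    have hj : j ≠ j' := fun h => hne (by rw [h])
    exact ((disjoint_singleton.2 hj).preimage _).mono inter_subset_right inter_subset_right
  · exact (h𝒞 hm).mono inter_subset_left inter_subset_left

lemma refinedPiece_subset_or_disjoint (h𝒞 : Pairwise (Disjoint on 𝒞)) (hA : ∀ m, A m ⊆ 𝒞 m)
    (i : ℕ × Bool × List α) (m : ℕ) :
    refinedPiece 𝒞 A K i ⊆ A m ∨ Disjoint (refinedPiece 𝒞 A K i) (A m) := by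
  by_cases hm : i.1 = m
  · subst hm
    exact (cylinderLabel_fiber_subset_or_disjoint i.2).imp (inter_subset_right.trans ·)
      (·.mono_left inter_subset_right)
  · exact Or.inr ((h𝒞 hm).mono inter_subset_left (hA m))

lemma refinedPiece_subset_cylinder (hx : x ∈ refinedPiece 𝒞 A K i) :
    refinedPiece 𝒞 A K i ⊆ cylinder x i.2.2.length := fun _ hy => by
  have hxi : cylinderLabel (A i.1) (K i.1) x = i.2 := hx.2
  simpa only [hxi] using mem_cylinder_of_cylinderLabel_eq (hy.2.trans hxi.symm)

lemma le_length_of_mem_refinedPiece (hx : x ∈ refinedPiece 𝒞 A K i) : K i.1 ≤ i.2.2.length :=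
  hx.2 ▸ le_length_cylinderLabel

lemma isClosed_refinedPiece [TopologicalSpace α] [DiscreteTopology α]
    (h𝒞 : ∀ m, IsClosed (𝒞 m)) (hA : ∀ m, IsClosed (A m)) (i : ℕ × Bool × List α) :
    IsClosed (refinedPiece 𝒞 A K i) :=
  (h𝒞 _).inter (isClosed_cylinderLabel_fiber (hA _) _)

end RefinedPiece

section Diameter

variable {𝒞 A : ℕ → Set (ℕ → Bool)} {K : ℕ → ℕ}

lemma diam_image_refinedPiece_le (i : ℕ × Bool × List Bool) :
    Metric.diam (cantorMap '' refinedPiece 𝒞 A K i) ≤ 3⁻¹ ^ max (K i.1) i.2.2.length := by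
  rcases eq_empty_or_nonempty (refinedPiece 𝒞 A K i) with h | ⟨x, hx⟩
  · simp only [h, image_empty, Metric.diam_empty]
    positivity
  · rw [max_eq_right (le_length_of_mem_refinedPiece hx)]
    exact diam_image_cantorMap_le (refinedPiece_subset_cylinder hx)

lemma tendsto_diam_image_refinedPiece (hK : ∀ m, m ≤ K m) :
    Tendsto (fun i => Metric.diam (cantorMap '' refinedPiece 𝒞 A K i)) cofinite (𝓝 0) := by
  refine tendsto_order.2 ⟨fun δ hδ => .of_forall fun i => hδ.trans_le Metric.diam_nonneg,
    fun δ hδ => ?_⟩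
  obtain ⟨L, hL⟩ := exists_pow_lt_of_lt_one hδ (by norm_num : (3⁻¹ : ℝ) < 1)
  refine eventually_cofinite.2 <| ((finite_Iio L).prod (finite_univ.prod
    (List.finite_length_lt Bool L))).subset ?_
  rintro ⟨m, b, w⟩ hi
  obtain ⟨x, hx⟩ : (refinedPiece 𝒞 A K (m, b, w)).Nonempty := by
    by_contra h
    exact hi (by simp [not_nonempty_iff_eq_empty.1 h, hδ])
  have hw : w.length < L := by
    by_contra! hLw
    exact hi <| (diam_image_refinedPiece_le _).trans_lt <|
      (pow_le_pow_of_le_one (by norm_num) (by norm_num) (hLw.trans (le_max_right _ _))).trans_lt hL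
  have hKw : K m ≤ w.length := le_length_of_mem_refinedPiece hx
  exact ⟨(hK m).trans_lt (hKw.trans_lt hw), mem_univ _, hw⟩

end Diameter

theorem stmt_18_general (𝒞 : ℕ → Set ℝ)
    (h𝒞cl : ∀ n, IsClosed (𝒞 n))
    (h𝒞union : ⋃ n, 𝒞 n = cantorC)
    (h𝒞disj : Pairwise (Function.onFun Disjoint 𝒞))
    (A : ℕ → Set ℝ) (hAcl : ∀ n, IsClosed (A n)) (hAsub : ∀ n, A n ⊆ 𝒞 n)
    (ε : ℝ) (hε : 0 < ε) :
    ∃ 𝒟 : ℕ → Set ℝ, (∀ n, IsClosed (𝒟 n)) ∧ (⋃ n, 𝒟 n = cantorC) ∧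
      Pairwise (Function.onFun Disjoint 𝒟) ∧
      (∀ n, Metric.diam (𝒟 n) < ε) ∧
      Filter.Tendsto (fun n => Metric.diam (𝒟 n)) Filter.atTop (nhds 0) ∧
      (∀ n, ∃ m, 𝒟 n ⊆ 𝒞 m) ∧
      (∀ n m, 𝒟 n ⊆ A m ∨ Disjoint (𝒟 n) (A m)) := by
  obtain ⟨k, hk⟩ := exists_pow_lt_of_lt_one hε (by norm_num : (3⁻¹ : ℝ) < 1)
  have hcover : ⋃ m, cantorMap ⁻¹' 𝒞 m = univ := by
    rw [← preimage_iUnion, h𝒞union, ← range_cantorMap, preimage_range]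
  have hdisj : Pairwise (Disjoint on fun m => cantorMap ⁻¹' 𝒞 m) := fun _ _ h =>
    (h𝒞disj h).preimage cantorMap
  -- levels `K m = m + k`: diameters stay below `3⁻¹ ^ k < ε`, and `K m ≥ m` makes them null
  set P := refinedPiece (fun m => cantorMap ⁻¹' 𝒞 m) (fun m => cantorMap ⁻¹' A m) (· + k)
  let e : ℕ ≃ ℕ × Bool × List Bool := (Denumerable.ofEncodableOfInfinite _).eqv.symm
  refine ⟨fun n => cantorMap '' P (e n), fun n => ?_, ?_, fun n n' h => ?_, fun n => ?_, ?_,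
    fun n => ⟨(e n).1, image_subset_iff.2 inter_subset_left⟩, fun n m => ?_⟩
  · have hP : IsClosed (P (e n)) :=
      isClosed_refinedPiece (fun m => (h𝒞cl m).preimage continuous_cantorMap)
        (fun m => (hAcl m).preimage continuous_cantorMap) (e n)
    exact (hP.isCompact.image continuous_cantorMap).isClosed
  · rw [← image_iUnion, e.surjective.iUnion_comp P, iUnion_refinedPiece hcover, image_univ,
      range_cantorMap]
  · exact (disjoint_image_iff cantorMap_injective).2
      (pairwise_disjoint_refinedPiece hdisj (e.injective.ne h))
  · exact (diam_image_refinedPiece_le _).trans_lt <| (pow_le_pow_of_le_one (by norm_num)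
      (by norm_num) ((Nat.le_add_left k _).trans (le_max_left _ _))).trans_lt hk
  · exact (tendsto_diam_image_refinedPiece fun m => Nat.le_add_right m k).comp
      (Nat.cofinite_eq_atTop ▸ e.injective.tendsto_cofinite)
  · exact (refinedPiece_subset_or_disjoint hdisj (fun m => preimage_mono (hAsub m)) (e n) m).imp
      image_subset_iff.2 disjoint_image_left.2

/-- Lemma 19: refining null partitions of the Cantor set. -/
theorem stmt_18 (𝒞 : ℕ → Set ℝ)
    (h𝒞cl : ∀ n, IsClosed (𝒞 n)) (h𝒞sub : ∀ n, 𝒞 n ⊆ cantorC)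
    (h𝒞union : ⋃ n, 𝒞 n = cantorC)
    (h𝒞disj : Pairwise (Function.onFun Disjoint 𝒞))
    (A : ℕ → Set ℝ) (hAcl : ∀ n, IsClosed (A n)) (hAsub : ∀ n, A n ⊆ 𝒞 n)
    (ε : ℝ) (hε : 0 < ε) :
    ∃ 𝒟 : ℕ → Set ℝ, (∀ n, IsClosed (𝒟 n)) ∧ (⋃ n, 𝒟 n = cantorC) ∧
      Pairwise (Function.onFun Disjoint 𝒟) ∧
      (∀ n, Metric.diam (𝒟 n) < ε) ∧
      Filter.Tendsto (fun n => Metric.diam (𝒟 n)) Filter.atTop (nhds 0) ∧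
      (∀ n, ∃ m, 𝒟 n ⊆ 𝒞 m) ∧
      (∀ n m, 𝒟 n ⊆ A m ∨ Disjoint (𝒟 n) (A m)) :=
  stmt_18_general 𝒞 h𝒞cl h𝒞union h𝒞disj A hAcl hAsub ε hε
end
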